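/- arXiv:2102.12451 — 4 statements merged into one kernel-verified Lean document; each statement's English description precedes it below -/
import Mathlib

section
/- Assume Condition 1 holds for w and let {X_n : n ≥ 1} be i.i.d. exponential random variables with rate λ > 0, i.e. F(t) = 1 − e^{−λt}. Then ∫_0^∞ w(1 − e^{−λz}) dz = (1/λ) ∫_0^1 w(x)/(1−x) dx =: μ_w, this quantity is finite, and E[C_n(w)] = (1/λ) Σ_{k=0}^{n−1} w(k/n)/(n−k) converges to μ_w as n → ∞. -/
open MeasureTheory ProbabilityTheory Real Filter Set

/-- `orderStat x k` is the `k`-th ascending order statistic `x_{k:n}` of the tuple `x`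
(for `1 ≤ k ≤ n`), with the convention `x_{0:n} = 0` (and junk value `0` for `k > n`). -/
noncomputable def orderStat {n : ℕ} (x : Fin n → ℝ) (k : ℕ) : ℝ :=
  if h : 1 ≤ k ∧ k ≤ n then (x ∘ Tuple.sort x) ⟨k - 1, by omega⟩ else 0

/-- The statistic `C_n(w) = ∑_{k=0}^{n-1} w(k/n) (X_{k+1:n} - X_{k:n})`. -/
noncomputable def Cw {Ω : Type*} (w : ℝ → ℝ) (X : ℕ → Ω → ℝ) (n : ℕ) (ω : Ω) : ℝ :=
  ∑ k ∈ Finset.range n,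
    w (k / n) * (orderStat (fun i : Fin n => X i ω) (k + 1)
      - orderStat (fun i : Fin n => X i ω) k)

/-- Condition 1: `w` is continuous on `[0,1]` and `|w(x)| ≤ c (1-x)^β` for all
`x ∈ [1-x₀, 1]`, for some `x₀ ∈ (0,1)`, `β ∈ (0,1]`, `c > 0`. -/
def Condition1 (w : ℝ → ℝ) (β : ℝ) : Prop :=
  ContinuousOn w (Set.Icc 0 1) ∧ β ∈ Set.Ioc (0 : ℝ) 1 ∧
    ∃ x₀ ∈ Set.Ioo (0 : ℝ) 1, ∃ c > (0 : ℝ),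
      ∀ x ∈ Set.Icc (1 - x₀) 1, |w x| ≤ c * (1 - x) ^ β


open scoped ENNReal NNReal

namespace MeanCwAux


lemma image_expMap {lam : ℝ} (hlam : 0 < lam) :
    (fun z => 1 - Real.exp (-(lam * z))) '' (Ioi (0:ℝ)) = Ioo (0:ℝ) 1 := by
  ext x
  constructor
  · rintro ⟨z, hz, rfl⟩
    have hz' : (0:ℝ) < z := hz
    have h1 : Real.exp (-(lam * z)) < 1 := by
      rw [Real.exp_lt_one_iff]; nlinarith
    have h2 : 0 < Real.exp (-(lam * z)) := Real.exp_pos _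
    show 1 - Real.exp (-(lam * z)) ∈ Ioo (0:ℝ) 1
    exact ⟨by linarith, by linarith⟩
  · rintro ⟨hx0, hx1⟩
    have h1x : 0 < 1 - x := by linarith
    refine ⟨-Real.log (1 - x) / lam, ?_, ?_⟩
    · have : Real.log (1 - x) < 0 := Real.log_neg h1x (by linarith)
      have : 0 < -Real.log (1 - x) := by linarith
      exact div_pos this hlam
    · show 1 - Real.exp (-(lam * (-Real.log (1 - x) / lam))) = x
      have : lam * (-Real.log (1 - x) / lam) = -Real.log (1 - x) := by
        field_simp
      rw [this, neg_neg, Real.exp_log h1x]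
      ring

lemma deriv_expMap {lam : ℝ} (z : ℝ) :
    HasDerivAt (fun z => 1 - Real.exp (-(lam * z))) (lam * Real.exp (-(lam * z))) z := by
  have h := (ProbabilityTheory.hasDerivAt_neg_exp_mul_exp (r := lam) (x := z)).const_add 1
  simpa [sub_eq_add_neg] using h

lemma injOn_expMap {lam : ℝ} (hlam : 0 < lam) :
    InjOn (fun z => 1 - Real.exp (-(lam * z))) (Ioi (0:ℝ)) := by
  intro z1 _ z2 _ h
  simp only [sub_right_inj] at h
  have := Real.exp_injective h
  have := neg_injective this
  exact mul_left_cancel₀ hlam.ne' this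

lemma cv_integral {lam : ℝ} (hlam : 0 < lam) (g : ℝ → ℝ) :
    ∫ x in Ioo (0:ℝ) 1, g x
      = ∫ z in Ioi (0:ℝ), (lam * Real.exp (-(lam * z))) * g (1 - Real.exp (-(lam * z))) := by
  rw [← image_expMap hlam,
    integral_image_eq_integral_abs_deriv_smul measurableSet_Ioi
      (fun z _ => (deriv_expMap z).hasDerivWithinAt) (injOn_expMap hlam) g]
  refine setIntegral_congr_fun measurableSet_Ioi fun z _ => ?_
  rw [abs_of_pos (by positivity), smul_eq_mul]

lemma cv_integrableOn {lam : ℝ} (hlam : 0 < lam) (g : ℝ → ℝ) :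
    IntegrableOn g (Ioo (0:ℝ) 1) ↔
      IntegrableOn
        (fun z => (lam * Real.exp (-(lam * z))) * g (1 - Real.exp (-(lam * z))))
        (Ioi (0:ℝ)) := by
  rw [← image_expMap hlam,
    integrableOn_image_iff_integrableOn_abs_deriv_smul measurableSet_Ioi
      (fun z _ => (deriv_expMap z).hasDerivWithinAt) (injOn_expMap hlam) g]
  constructor <;> intro h <;> apply h.congr_fun _ measurableSet_Ioi <;>
    intro z _ <;> simp [abs_of_pos (mul_pos hlam (Real.exp_pos _)), smul_eq_mul]

lemma cv_integral' {lam : ℝ} (hlam : 0 < lam) (G : ℝ → ℝ) :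
    ∫ x in Ioo (0:ℝ) 1, G x / (1 - x)
      = lam * ∫ z in Ioi (0:ℝ), G (1 - Real.exp (-(lam * z))) := by
  rw [cv_integral hlam (fun x => G x / (1 - x)), ← integral_const_mul]
  refine setIntegral_congr_fun measurableSet_Ioi fun z _ => ?_
  have he : (0:ℝ) < Real.exp (-(lam * z)) := Real.exp_pos _
  have : 1 - (1 - Real.exp (-(lam * z))) = Real.exp (-(lam * z)) := by ring
  rw [this]
  field_simp

lemma cv_integrableOn' {lam : ℝ} (hlam : 0 < lam) (G : ℝ → ℝ) :
    IntegrableOn (fun x => G x / (1 - x)) (Ioo (0:ℝ) 1) ↔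
      IntegrableOn (fun z => G (1 - Real.exp (-(lam * z)))) (Ioi (0:ℝ)) := by
  rw [cv_integrableOn hlam (fun x => G x / (1 - x))]
  have key : ∀ z : ℝ,
      (lam * Real.exp (-(lam * z))) * (G (1 - Real.exp (-(lam * z))) / (1 - (1 - Real.exp (-(lam * z)))))
        = lam * G (1 - Real.exp (-(lam * z))) := by
    intro z
    have he : (0:ℝ) < Real.exp (-(lam * z)) := Real.exp_pos _
    have : 1 - (1 - Real.exp (-(lam * z))) = Real.exp (-(lam * z)) := by ring
    rw [this]; field_simp
  constructor <;> intro h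
  · have h2 := h.congr_fun (fun z _ => key z) measurableSet_Ioi
    have h3 : IntegrableOn (fun z => lam⁻¹ * (lam * G (1 - Real.exp (-(lam * z))))) (Ioi (0:ℝ)) :=
      h2.const_mul (lam⁻¹)
    refine IntegrableOn.congr_fun h3 (fun z _ => ?_) measurableSet_Ioi
    field_simp
  · have h3 : IntegrableOn (fun z => lam * G (1 - Real.exp (-(lam * z)))) (Ioi (0:ℝ)) :=
      h.const_mul lam
    exact IntegrableOn.congr_fun h3 (fun z _ => (key z).symm) measurableSet_Ioi



lemma exists_bound {w : ℝ → ℝ} (hc : ContinuousOn w (Icc 0 1)) :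
    ∃ M : ℝ, 0 ≤ M ∧ ∀ x ∈ Icc (0:ℝ) 1, |w x| ≤ M := by
  obtain ⟨C, hC⟩ := isCompact_Icc.exists_bound_of_continuousOn hc
  exact ⟨max C 0, le_max_right _ _, fun x hx => (hC x hx).trans (le_max_left _ _)⟩

/-- The dominating function for `w y / (1-y)` type quotients. -/
lemma dominating {w : ℝ → ℝ} {β : ℝ} (hw : Condition1 w β) :
    ∃ g : ℝ → ℝ, IntegrableOn g (Ioo (0:ℝ) 1) volume ∧
      ∀ x ∈ Ioo (0:ℝ) 1, ∀ y, 0 ≤ y → y ≤ x → |w y / (1 - y)| ≤ g x := by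
  obtain ⟨hcont, hβ, x₀, hx₀, c, hc, hbound⟩ := hw
  obtain ⟨M, hM0, hM⟩ := exists_bound hcont
  refine ⟨fun x => M / x₀ + c * (1 - x) ^ (β - 1), ?_, ?_⟩
  · apply Integrable.add
    · exact integrableOn_const (by simp [Real.volume_Ioo])
    · have h1 : IntervalIntegrable (fun x : ℝ => x ^ (β - 1)) volume 0 1 :=
        intervalIntegral.intervalIntegrable_rpow' (by linarith [hβ.1])
      have h2 : IntervalIntegrable (fun x : ℝ => (1 - x) ^ (β - 1)) volume 0 1 := by
        have := (IntervalIntegrable.comp_sub_left h1 1)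
        simpa using this.symm
      have h3 : IntegrableOn (fun x : ℝ => (1 - x) ^ (β - 1)) (Ioo (0:ℝ) 1) volume := by
        rw [intervalIntegrable_iff_integrableOn_Ioo_of_le (by norm_num : (0:ℝ) ≤ 1)] at h2
        exact h2
      exact h3.const_mul c
  · rintro x ⟨hx0, hx1⟩ y hy0 hyx
    have hy1 : y < 1 := lt_of_le_of_lt hyx hx1
    have h1y : 0 < 1 - y := by linarith
    have h1x : 0 < 1 - x := by linarith
    have habs : |w y / (1 - y)| = |w y| / (1 - y) := by
      rw [abs_div, abs_of_pos h1y]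
    rw [habs]
    rcases le_or_gt (1 - x₀) y with hcase | hcase
    · -- tail bound
      have hb := hbound y ⟨hcase, hy1.le⟩
      have h2 : |w y| / (1 - y) ≤ c * (1 - y) ^ (β - 1) := by
        rw [Real.rpow_sub_one h1y.ne' β]
        rw [div_le_iff₀ h1y]
        calc |w y| ≤ c * (1 - y) ^ β := hb
        _ = c * ((1-y) ^ β / (1-y) * (1-y)) := by field_simp
        _ = c * ((1-y) ^ β / (1 - y)) * (1 - y) := by ring
      have h3 : (1 - y : ℝ) ^ (β - 1) ≤ (1 - x) ^ (β - 1) :=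
        Real.rpow_le_rpow_of_nonpos h1x (by linarith) (by linarith [hβ.2])
      have h4 : c * (1 - y) ^ (β - 1) ≤ c * (1 - x) ^ (β - 1) := by
        exact mul_le_mul_of_nonneg_left h3 hc.le
      have h5 : (0:ℝ) ≤ M / x₀ := div_nonneg hM0 hx₀.1.le
      linarith
    · -- bounded part
      have h2 : |w y| ≤ M := hM y ⟨hy0, hy1.le⟩
      have h3 : x₀ ≤ 1 - y := by linarith
      have h4 : |w y| / (1 - y) ≤ M / x₀ := by
        apply div_le_div₀ hM0 h2 hx₀.1 h3
      have h5 : (0:ℝ) ≤ c * (1 - x) ^ (β - 1) :=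
        mul_nonneg hc.le (Real.rpow_nonneg h1x.le _)
      linarith

lemma part3 {w : ℝ → ℝ} {β : ℝ} (hw : Condition1 w β) :
    IntegrableOn (fun x => w x / (1 - x)) (Ioo (0:ℝ) 1) volume := by
  obtain ⟨g, hg_int, hg⟩ := dominating hw
  have hmeas : AEStronglyMeasurable (fun x => w x / (1 - x))
      ((volume : Measure ℝ).restrict (Ioo 0 1)) := by
    have hcont : ContinuousOn (fun x => w x / (1 - x)) (Ioo (0:ℝ) 1) := by
      apply ContinuousOn.div
      · exact hw.1.mono (fun x hx => ⟨hx.1.le, hx.2.le⟩)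
      · exact (continuous_const.sub continuous_id).continuousOn
      · rintro x ⟨_, hx1⟩; intro h; have := sub_eq_zero.mp h; linarith
    exact hcont.aestronglyMeasurable measurableSet_Ioo
  refine Integrable.mono' hg_int hmeas ?_
  rw [ae_restrict_iff' measurableSet_Ioo]
  filter_upwards with x hx
  exact hg x hx x hx.1.le le_rfl


noncomputable def Fn (w : ℝ → ℝ) (n : ℕ) (x : ℝ) : ℝ :=
  w ((⌊(n:ℝ) * x⌋₊ : ℝ) / n) / (1 - (⌊(n:ℝ) * x⌋₊ : ℝ) / n)

lemma floor_eq_on_piece {n k : ℕ} (hk : k < n) {x : ℝ}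
    (h1 : (k:ℝ)/n ≤ x) (h2 : x < ((k:ℝ)+1)/n) : ⌊(n:ℝ) * x⌋₊ = k := by
  have hn : (0:ℝ) < n := Nat.cast_pos.2 (by omega)
  have hx0 : (0:ℝ) ≤ x := le_trans (by positivity) h1
  rw [Nat.floor_eq_iff (by positivity)]
  constructor
  · have := (div_le_iff₀ hn).1 h1
    linarith
  · have := (lt_div_iff₀ hn).1 h2
    linarith

lemma Fn_eqOn_piece (w : ℝ → ℝ) {n k : ℕ} (hk : k < n) :
    EqOn (fun _ => w ((k:ℝ)/n) / (1 - (k:ℝ)/n)) (Fn w n)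
      (Ico ((k:ℝ)/n) (((k:ℝ)+1)/n)) := by
  rintro x ⟨h1, h2⟩
  simp only [Fn, floor_eq_on_piece hk h1 h2]

lemma union_pieces {n : ℕ} (hn : 1 ≤ n) :
    Ico (0:ℝ) 1 = ⋃ k ∈ Finset.range n, Ico ((k:ℝ)/n) (((k:ℝ)+1)/n) := by
  have hn' : (0:ℝ) < n := Nat.cast_pos.2 hn
  ext x
  simp only [mem_Ico, mem_iUnion, Finset.mem_range, exists_prop]
  constructor
  · rintro ⟨h0, h1⟩
    have hx0 : (0:ℝ) ≤ (n:ℝ) * x := by positivity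
    refine ⟨⌊(n:ℝ) * x⌋₊, ?_, ?_, ?_⟩
    · rw [← Nat.cast_lt (α := ℝ)]
      calc (⌊(n:ℝ) * x⌋₊ : ℝ) ≤ (n:ℝ) * x := Nat.floor_le hx0
      _ < n := by nlinarith
    · rw [div_le_iff₀ hn']
      have := Nat.floor_le hx0
      linarith
    · rw [lt_div_iff₀ hn']
      have := Nat.lt_floor_add_one ((n:ℝ) * x)
      linarith
  · rintro ⟨k, hk, h1, h2⟩
    have hk' : ((k:ℝ)+1) ≤ n := by
      have h : ((k:ℝ)+1) = ((k+1 : ℕ) : ℝ) := by push_cast; ring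
      rw [h, Nat.cast_le]; omega
    refine ⟨le_trans (by positivity) h1, ?_⟩
    calc x < ((k:ℝ)+1)/n := h2
    _ ≤ 1 := by rw [div_le_one hn']; exact hk'

lemma pieces_disjoint {n : ℕ} :
    Set.Pairwise ↑(Finset.range n)
      (Function.onFun Disjoint fun k : ℕ => Ico ((k:ℝ)/n) (((k:ℝ)+1)/n)) := by
  intro k hk l hl hkl
  simp only [Finset.mem_coe, Finset.mem_range] at hk hl
  have hn' : (0:ℝ) < n := Nat.cast_pos.2 (by omega)
  have key : ∀ a b : ℕ, a < b → ((a:ℝ)+1)/(n:ℝ) ≤ (b:ℝ)/(n:ℝ) := by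
    intro a b hab
    gcongr
    exact_mod_cast hab
  simp only [Function.onFun]
  rw [Set.Ico_disjoint_Ico]
  rcases lt_or_gt_of_ne hkl with h | h
  · exact le_trans (min_le_left _ _) (le_trans (key k l h) (le_max_right _ _))
  · exact le_trans (min_le_right _ _) (le_trans (key l k h) (le_max_left _ _))

lemma integrableOn_Fn_piece (w : ℝ → ℝ) {n k : ℕ} (hk : k < n) :
    IntegrableOn (Fn w n) (Ico ((k:ℝ)/n) (((k:ℝ)+1)/n)) volume := by
  have h : IntegrableOn (fun _ : ℝ => w ((k:ℝ)/n) / (1 - (k:ℝ)/n))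
      (Ico ((k:ℝ)/n) (((k:ℝ)+1)/n)) volume :=
    integrableOn_const measure_Ico_lt_top.ne
  exact h.congr_fun (Fn_eqOn_piece w hk) measurableSet_Ico

lemma integral_Fn_piece (w : ℝ → ℝ) {n k : ℕ} (hk : k < n) :
    ∫ x in Ico ((k:ℝ)/n) (((k:ℝ)+1)/n), Fn w n x
      = w ((k:ℝ)/n) / ((n:ℝ) - k) := by
  have hn' : (0:ℝ) < n := Nat.cast_pos.2 (by omega)
  have hnk : (0:ℝ) < (n:ℝ) - k := by
    have : (k:ℝ) < n := by exact_mod_cast hk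
    linarith
  rw [setIntegral_congr_fun measurableSet_Ico (Fn_eqOn_piece w hk).symm,
    setIntegral_const]
  rw [measureReal_def, Real.volume_Ico]
  have h1 : ((k:ℝ)+1)/n - (k:ℝ)/n = 1/n := by field_simp; ring
  rw [h1, ENNReal.toReal_ofReal (by positivity), smul_eq_mul]
  have h2 : 1 - (k:ℝ)/n = ((n:ℝ) - k)/n := by field_simp
  rw [h2]
  field_simp

lemma integral_Fn (w : ℝ → ℝ) {n : ℕ} (hn : 1 ≤ n) :
    ∫ x in Ioo (0:ℝ) 1, Fn w n x
      = ∑ k ∈ Finset.range n, w ((k:ℝ)/n) / ((n:ℝ) - k) := by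
  rw [← integral_Ico_eq_integral_Ioo, union_pieces hn,
    integral_biUnion_finset (Finset.range n) (fun _ _ => measurableSet_Ico)
      pieces_disjoint (fun k hk => integrableOn_Fn_piece w (Finset.mem_range.1 hk))]
  exact Finset.sum_congr rfl fun k hk => integral_Fn_piece w (Finset.mem_range.1 hk)

lemma Fn_measurable (w : ℝ → ℝ) (n : ℕ) : Measurable (Fn w n) := by
  have h1 : Measurable fun x : ℝ => ⌊(n:ℝ) * x⌋₊ :=
    Nat.measurable_floor.comp (measurable_const.mul measurable_id)
  exact (Measurable.of_discrete (f := fun k : ℕ => w ((k:ℝ)/n) / (1 - (k:ℝ)/n))).comp h1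

lemma floor_div_le {n : ℕ} {x : ℝ} (hx : 0 ≤ x) : (⌊(n:ℝ) * x⌋₊ : ℝ) / n ≤ x := by
  rcases Nat.eq_zero_or_pos n with h | h
  · simp [h, hx]
  · have hn' : (0:ℝ) < n := Nat.cast_pos.2 h
    rw [div_le_iff₀ hn']
    have := Nat.floor_le (by positivity : (0:ℝ) ≤ (n:ℝ) * x)
    linarith

lemma Fn_tendsto {w : ℝ → ℝ} {β : ℝ} (hw : Condition1 w β) {x : ℝ}
    (hx : x ∈ Ioo (0:ℝ) 1) :
    Tendsto (fun n : ℕ => Fn w n x) atTop (nhds (w x / (1 - x))) := by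
  obtain ⟨hx0, hx1⟩ := hx
  have hfn : Tendsto (fun n : ℕ => (⌊(n:ℝ) * x⌋₊ : ℝ) / n) atTop (nhds x) := by
    have hlow : Tendsto (fun n : ℕ => x - 1/(n:ℝ)) atTop (nhds x) := by
      have := tendsto_const_nhds (x := x) (f := atTop (α := ℕ)) |>.sub
        tendsto_one_div_atTop_nhds_zero_nat
      simpa using this
    refine tendsto_of_tendsto_of_tendsto_of_le_of_le' hlow tendsto_const_nhds ?_ ?_
    · filter_upwards [eventually_ge_atTop 1] with n hn
      have hn' : (0:ℝ) < n := Nat.cast_pos.2 hn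
      rw [sub_le_iff_le_add, ← sub_le_iff_le_add']
      rw [sub_le_iff_le_add]
      rw [← add_div, le_div_iff₀ hn']
      have := (Nat.lt_floor_add_one ((n:ℝ) * x)).le
      linarith
    · filter_upwards with n
      exact floor_div_le hx0.le
  have hcw : ContinuousAt (fun y : ℝ => w y / (1 - y)) x := by
    apply ContinuousAt.div
    · exact hw.1.continuousAt (Icc_mem_nhds hx0 hx1)
    · exact (continuous_const.sub continuous_id).continuousAt
    · intro h
      have := sub_eq_zero.mp h
      linarith
  exact (hcw.tendsto.comp hfn)

lemma part5 {w : ℝ → ℝ} {β : ℝ} (hw : Condition1 w β) :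
    Tendsto (fun n : ℕ => ∑ k ∈ Finset.range n, w ((k:ℝ) / n) / ((n:ℝ) - k)) atTop
      (nhds (∫ x in Ioo (0:ℝ) 1, w x / (1 - x))) := by
  obtain ⟨g, hg_int, hg⟩ := dominating hw
  have hdct := tendsto_integral_of_dominated_convergence
    (μ := (volume : Measure ℝ).restrict (Ioo 0 1)) (F := fun n => Fn w n)
    (f := fun x => w x / (1 - x)) g
    (fun n => (Fn_measurable w n).aestronglyMeasurable)
    hg_int
    ?_ ?_
  · refine hdct.congr' ?_
    filter_upwards [eventually_ge_atTop 1] with n hn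
    exact integral_Fn w hn
  · intro n
    rw [ae_restrict_iff' measurableSet_Ioo]
    filter_upwards with x hx
    rw [Real.norm_eq_abs]
    exact hg x hx ((⌊(n:ℝ) * x⌋₊ : ℝ) / n) (by positivity) (floor_div_le hx.1.le)
  · rw [ae_restrict_iff' measurableSet_Ioo]
    filter_upwards with x hx
    exact Fn_tendsto hw hx


section BetaSec
open intervalIntegral


lemma beta_nat (m : ℕ) : ∀ j : ℕ, (∫ x in (0:ℝ)..1, x^j * (1-x)^m)
    = (j.factorial * m.factorial : ℝ) / ((j + m + 1).factorial) := by
  induction m with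
  | zero =>
    intro j
    simp only [pow_zero, mul_one, Nat.factorial_zero, Nat.cast_one, Nat.add_zero]
    rw [integral_pow]
    have h : ((j+0+1).factorial : ℝ) = (j+1) * j.factorial := by
      simp [Nat.factorial_succ]
    rw [h]
    have hj : (0:ℝ) < (j:ℝ)+1 := by positivity
    have hjf : (0:ℝ) < (j.factorial : ℝ) := by exact_mod_cast j.factorial_pos
    rw [one_pow, zero_pow (by omega), sub_zero]
    field_simp
  | succ m ih =>
    intro j
    have hderiv : ∀ x ∈ uIcc (0:ℝ) 1, HasDerivAt (fun y : ℝ => y^(j+1) * (1-y)^(m+1))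
        (((j:ℝ)+1)*x^j*(1-x)^(m+1) - ((m:ℝ)+1)*x^(j+1)*(1-x)^m) x := by
      intro x _
      have h1 : HasDerivAt (fun y : ℝ => y^(j+1)) (((j:ℝ)+1)*x^j) x := by
        have := hasDerivAt_pow (j+1) x
        simpa using this
      have h2 : HasDerivAt (fun y : ℝ => (1-y)^(m+1)) (-(((m:ℝ)+1)*(1-x)^m)) x := by
        have h3 := (hasDerivAt_pow (m+1) (1-x)).comp x
          ((hasDerivAt_const x (1:ℝ)).sub (hasDerivAt_id x))
        refine h3.congr_deriv ?_
        simp only [Nat.add_sub_cancel, Nat.cast_add, Nat.cast_one]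
        ring
      have := h1.mul h2
      refine this.congr_deriv ?_
      ring
    have hc1 : Continuous fun x : ℝ => ((j:ℝ)+1)*x^j*(1-x)^(m+1) := by fun_prop
    have hc2 : Continuous fun x : ℝ => ((m:ℝ)+1)*x^(j+1)*(1-x)^m := by fun_prop
    have hint : IntervalIntegrable
        (fun x : ℝ => ((j:ℝ)+1)*x^j*(1-x)^(m+1) - ((m:ℝ)+1)*x^(j+1)*(1-x)^m)
        volume 0 1 := ((hc1.sub hc2)).intervalIntegrable 0 1
    have heq := integral_eq_sub_of_hasDerivAt hderiv hint
    have hz : (fun y : ℝ => y^(j+1) * (1-y)^(m+1)) 1 - (fun y : ℝ => y^(j+1) * (1-y)^(m+1)) 0 = 0 := by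
      simp
    rw [hz] at heq
    rw [integral_sub (hc1.intervalIntegrable 0 1) (hc2.intervalIntegrable 0 1)] at heq
    have e1 : (∫ x in (0:ℝ)..1, ((j:ℝ)+1)*x^j*(1-x)^(m+1))
        = ((j:ℝ)+1) * ∫ x in (0:ℝ)..1, x^j*(1-x)^(m+1) := by
      rw [← intervalIntegral.integral_const_mul]
      congr 1; ext x; ring
    have e2 : (∫ x in (0:ℝ)..1, ((m:ℝ)+1)*x^(j+1)*(1-x)^m)
        = ((m:ℝ)+1) * ∫ x in (0:ℝ)..1, x^(j+1)*(1-x)^m := by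
      rw [← intervalIntegral.integral_const_mul]
      congr 1; ext x; ring
    rw [e1, e2, ih (j+1)] at heq
    have hsolve : (∫ x in (0:ℝ)..1, x^j*(1-x)^(m+1))
        = ((m:ℝ)+1) * (((j+1).factorial * m.factorial : ℝ) / ((j + 1 + m + 1).factorial)) / ((j:ℝ)+1) := by
      have hj : ((j:ℝ)+1) ≠ 0 := by positivity
      field_simp at heq ⊢
      linarith
    rw [hsolve]
    have hf1 : (((j+1).factorial : ℝ)) = ((j:ℝ)+1) * j.factorial := by
      rw [Nat.factorial_succ]; push_cast; ring
    have hf2 : (((m+1).factorial : ℝ)) = ((m:ℝ)+1) * m.factorial := by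
      rw [Nat.factorial_succ]; push_cast; ring
    have hf3 : (j + 1 + m + 1) = (j + (m+1) + 1) := by omega
    rw [hf1, hf3, hf2]
    have hj : ((j:ℝ)+1) ≠ 0 := by positivity
    have hff : ((j + (m+1) + 1).factorial : ℝ) ≠ 0 := by
      exact_mod_cast (Nat.factorial_pos _).ne'
    field_simp

lemma beta_Ioo (j m : ℕ) : (∫ x in Ioo (0:ℝ) 1, x^j * (1-x)^m)
    = (j.factorial * m.factorial : ℝ) / ((j + m + 1).factorial) := by
  rw [← MeasureTheory.integral_Ioc_eq_integral_Ioo,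
    ← intervalIntegral.integral_of_le zero_le_one, beta_nat]


end BetaSec


lemma orderStat_le_iff {n : ℕ} (x : Fin n → ℝ) {k : ℕ} (hk1 : 1 ≤ k) (hkn : k ≤ n) (t : ℝ) :
    orderStat x k ≤ t ↔ k ≤ Fintype.card {i // x i ≤ t} := by
  rw [orderStat, dif_pos ⟨hk1, hkn⟩]
  have h := Tuple.lt_card_le_iff_apply_le_of_monotone (f := x ∘ Tuple.sort x) (a := t)
    (j := ⟨k - 1, by omega⟩) (Tuple.monotone_sort x)
  have hcard : (Finset.univ.filter fun i => (x ∘ Tuple.sort x) i ≤ t).card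
      = Fintype.card {i // x i ≤ t} := by
    rw [← Fintype.card_subtype]
    exact Fintype.card_congr ((Tuple.sort x).subtypeEquiv fun i => Iff.rfl)
  rw [hcard] at h
  rw [← h]
  constructor <;> intro hh <;> [skip; skip] <;>
    · simp only [Fin.lt_def] at * <;> omega

noncomputable def Ncount (n : ℕ) {Ω : Type*} (X : ℕ → Ω → ℝ) (t : ℝ) (ω : Ω) : ℕ :=
  (Finset.univ.filter fun i : Fin n => X i ω ≤ t).card

lemma Ncount_eq_card {n : ℕ} {Ω : Type*} (X : ℕ → Ω → ℝ) (t : ℝ) (ω : Ω) :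
    Ncount n X t ω = Fintype.card {i : Fin n // X i ω ≤ t} := by
  rw [Ncount, Fintype.card_subtype]

lemma measurable_Ncount {n : ℕ} {Ω : Type*} [MeasurableSpace Ω] {X : ℕ → Ω → ℝ}
    (hmeas : ∀ i, Measurable (X i)) (t : ℝ) :
    Measurable fun ω => Ncount n X t ω := by
  have : (fun ω => Ncount n X t ω)
      = fun ω => ∑ i : Fin n, if X i ω ≤ t then 1 else 0 := by
    funext ω
    rw [Ncount, Finset.card_filter]
  rw [this]
  apply Finset.measurable_sum
  intro i _
  exact Measurable.ite ((hmeas i) measurableSet_Iic) measurable_const measurable_const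

lemma orderStat_lt_iff {n : ℕ} {Ω : Type*} (X : ℕ → Ω → ℝ) {k : ℕ}
    (hk1 : 1 ≤ k) (hkn : k ≤ n) (t : ℝ) (ω : Ω) :
    t < orderStat (fun i : Fin n => X i ω) k ↔ Ncount n X t ω < k := by
  rw [← not_le, ← not_le, not_iff_not,
    orderStat_le_iff _ hk1 hkn, Ncount_eq_card]

lemma measurable_orderStat {n : ℕ} {Ω : Type*} [MeasurableSpace Ω] {X : ℕ → Ω → ℝ}
    (hmeas : ∀ i, Measurable (X i)) (k : ℕ) :
    Measurable fun ω => orderStat (fun i : Fin n => X i ω) k := by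
  by_cases h : 1 ≤ k ∧ k ≤ n
  · apply measurable_of_Iic
    intro t
    have hset : (fun ω => orderStat (fun i : Fin n => X i ω) k) ⁻¹' Iic t
        = (fun ω => Ncount n X t ω) ⁻¹' Ici k := by
      ext ω
      simp only [mem_preimage, mem_Iic, mem_Ici]
      rw [orderStat_le_iff _ h.1 h.2, Ncount_eq_card]
    rw [hset]
    exact measurable_Ncount hmeas t measurableSet_Ici
  · have : (fun ω => orderStat (fun i : Fin n => X i ω) k) = fun _ => 0 := by
      funext ω; rw [orderStat, dif_neg h]
    rw [this]
    exact measurable_const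

lemma abs_orderStat_le {n : ℕ} (x : Fin n → ℝ) (k : ℕ) :
    |orderStat x k| ≤ ∑ i : Fin n, |x i| := by
  by_cases h : 1 ≤ k ∧ k ≤ n
  · rw [orderStat, dif_pos h]
    exact Finset.single_le_sum (f := fun i => |x i|) (fun i _ => abs_nonneg _)
      (Finset.mem_univ _)
  · rw [orderStat, dif_neg h, abs_zero]
    exact Finset.sum_nonneg fun i _ => abs_nonneg _

lemma orderStat_nonneg {n : ℕ} {x : Fin n → ℝ} (hx : ∀ i, 0 ≤ x i) (k : ℕ) :
    0 ≤ orderStat x k := by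
  by_cases h : 1 ≤ k ∧ k ≤ n
  · rw [orderStat, dif_pos h]; exact hx _
  · rw [orderStat, dif_neg h]

section Exponential

lemma expMeasure_eq (r : ℝ) :
    expMeasure r = (volume : Measure ℝ).withDensity (exponentialPDF r) := rfl

lemma expMeasure_Iio_zero (r : ℝ) : expMeasure r (Iio 0) = 0 := by
  rw [expMeasure_eq, withDensity_apply _ measurableSet_Iio]
  exact lintegral_exponentialPDF_of_nonpos le_rfl

lemma expMeasure_Iic {r : ℝ} (hr : 0 < r) {t : ℝ} (ht : 0 ≤ t) :
    expMeasure r (Iic t) = ENNReal.ofReal (1 - Real.exp (-(r * t))) := by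
  rw [expMeasure_eq, withDensity_apply _ measurableSet_Iic,
    lintegral_exponentialPDF_eq_antiDeriv hr t, if_pos ht]

lemma exponentialPDFReal_eq (r x : ℝ) :
    exponentialPDFReal r x = if 0 ≤ x then r * Real.exp (-(r * x)) else 0 := by
  rw [exponentialPDFReal, gammaPDFReal]
  simp only [rpow_one, Real.Gamma_one, div_one, sub_self, rpow_zero, mul_one]

lemma integrable_id_expMeasure {r : ℝ} (hr : 0 < r) :
    Integrable (fun x : ℝ => x) (expMeasure r) := by
  have hpdfmeas : Measurable (exponentialPDF r) :=
    (measurable_exponentialPDFReal r).ennreal_ofReal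
  rw [expMeasure_eq, integrable_withDensity_iff hpdfmeas
    (Filter.Eventually.of_forall fun x : ℝ => (by rw [exponentialPDF]; exact ENNReal.ofReal_lt_top : exponentialPDF r x < ⊤))]
  have hfun : ∀ x : ℝ, (exponentialPDF r x).toReal = exponentialPDFReal r x := by
    intro x
    rw [exponentialPDF, ENNReal.toReal_ofReal (exponentialPDFReal_nonneg hr x)]
  have h1 : IntegrableOn (fun x : ℝ => x * (exponentialPDF r x).toReal) (Iic 0) volume := by
    have hz : EqOn (fun _ : ℝ => (0:ℝ)) (fun x : ℝ => x * (exponentialPDF r x).toReal)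
        (Iic 0) := by
      intro x hx
      simp only
      rcases lt_or_eq_of_le (mem_Iic.1 hx) with h | h
      · rw [hfun, exponentialPDFReal_eq, if_neg (not_le.2 h), mul_zero]
      · rw [h]; simp
    exact (integrableOn_zero).congr_fun hz measurableSet_Iic
  have h2 : IntegrableOn (fun x : ℝ => x * (exponentialPDF r x).toReal) (Ioi 0) volume := by
    have hb := integrableOn_rpow_mul_exp_neg_mul_rpow
      (s := 1) (p := 1) (b := r) (by norm_num) (by norm_num) hr
    simp only [Real.rpow_one] at hb
    have hmul : IntegrableOn (fun x : ℝ => r * (x * Real.exp (-r * x))) (Ioi 0) volume :=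
      hb.const_mul r
    apply IntegrableOn.congr_fun hmul _ measurableSet_Ioi
    intro x hx
    simp only
    rw [hfun, exponentialPDFReal_eq, if_pos (le_of_lt (mem_Ioi.1 hx))]
    ring_nf
  have := h1.union h2
  rwa [Iic_union_Ioi, integrableOn_univ] at this

end Exponential


section Binomial

variable {Ω : Type*} [MeasurableSpace Ω] {P : Measure Ω} [IsProbabilityMeasure P]
  {lam : ℝ} {X : ℕ → Ω → ℝ}

lemma P_le (hmeas : ∀ i, Measurable (X i))
    (hdist : ∀ i, Measure.map (X i) P = expMeasure lam)
    (hlam : 0 < lam) {t : ℝ} (ht : 0 ≤ t) (i : ℕ) :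
    P {ω | X i ω ≤ t} = ENNReal.ofReal (1 - Real.exp (-(lam * t))) := by
  have h : {ω | X i ω ≤ t} = X i ⁻¹' (Iic t) := rfl
  rw [h, ← Measure.map_apply (hmeas i) measurableSet_Iic, hdist i, expMeasure_Iic hlam ht]

lemma P_gt (hmeas : ∀ i, Measurable (X i))
    (hdist : ∀ i, Measure.map (X i) P = expMeasure lam)
    (hlam : 0 < lam) {t : ℝ} (ht : 0 ≤ t) (i : ℕ) :
    P {ω | t < X i ω} = ENNReal.ofReal (Real.exp (-(lam * t))) := by
  have hc : {ω | t < X i ω} = {ω | X i ω ≤ t}ᶜ := by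
    ext ω; simp [not_le]
  have hmset : MeasurableSet {ω | X i ω ≤ t} := (hmeas i) measurableSet_Iic
  rw [hc, prob_compl_eq_one_sub hmset, P_le hmeas hdist hlam ht i]
  have he1 : Real.exp (-(lam * t)) ≤ 1 := by
    rw [Real.exp_le_one_iff]; nlinarith
  have h1 : (1 : ℝ≥0∞) = ENNReal.ofReal (1 : ℝ) := by simp
  rw [h1, ← ENNReal.ofReal_sub _ (by linarith [Real.exp_pos (-(lam * t))])]
  congr 1
  ring

lemma meas_Ncount_eq (hmeas : ∀ i, Measurable (X i))
    (hindep : iIndepFun X P)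
    (hdist : ∀ i, Measure.map (X i) P = expMeasure lam)
    (hlam : 0 < lam) {n : ℕ} {t : ℝ} (ht : 0 ≤ t) (j : ℕ) :
    P {ω | Ncount n X t ω = j}
      = (n.choose j : ℝ≥0∞) * (ENNReal.ofReal (1 - Real.exp (-(lam * t)))) ^ j
        * (ENNReal.ofReal (Real.exp (-(lam * t)))) ^ (n - j) := by
  classical
  set p : ℝ≥0∞ := ENNReal.ofReal (1 - Real.exp (-(lam * t))) with hp
  set q : ℝ≥0∞ := ENNReal.ofReal (Real.exp (-(lam * t))) with hq
  set A : Finset (Fin n) → Set Ω := fun S => {ω | ∀ i : Fin n, (X i ω ≤ t ↔ i ∈ S)} with hA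
  set sS : Finset (Fin n) → ℕ → Set ℝ := fun S m =>
    if hm : m < n then (if (⟨m, hm⟩ : Fin n) ∈ S then Iic t else Ioi t) else univ with hsS
  have hsS_meas : ∀ S m, MeasurableSet (sS S m) := by
    intro S m
    rw [hsS]
    dsimp only
    split_ifs
    exacts [measurableSet_Iic, measurableSet_Ioi, MeasurableSet.univ]
  have hA_inter : ∀ S : Finset (Fin n), A S = ⋂ m ∈ Finset.range n, X m ⁻¹' (sS S m) := by
    intro S
    ext ω
    simp only [hA, mem_setOf_eq, mem_iInter, mem_preimage, Finset.mem_range]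
    constructor
    · intro h m hm
      rw [hsS]
      dsimp only
      rw [dif_pos hm]
      by_cases hmem : (⟨m, hm⟩ : Fin n) ∈ S
      · rw [if_pos hmem]; exact mem_Iic.2 ((h ⟨m, hm⟩).2 hmem)
      · rw [if_neg hmem]
        exact mem_Ioi.2 (lt_of_not_ge fun hle => hmem ((h ⟨m, hm⟩).1 hle))
    · intro h i
      have h2 := h i i.isLt
      rw [hsS] at h2
      dsimp only at h2
      rw [dif_pos i.isLt] at h2
      by_cases hmem : (⟨(i : ℕ), i.isLt⟩ : Fin n) ∈ S
      · rw [if_pos hmem] at h2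
        simp only [Fin.eta] at hmem
        exact ⟨fun _ => hmem, fun _ => h2⟩
      · rw [if_neg hmem] at h2
        simp only [Fin.eta] at hmem
        exact ⟨fun hle => absurd hle (not_le.2 h2), fun hmem' => absurd hmem' hmem⟩
  have hA_meas : ∀ S, MeasurableSet (A S) := by
    intro S
    rw [hA_inter]
    exact MeasurableSet.biInter (Finset.range n).countable_toSet
      fun m _ => (hmeas m) (hsS_meas S m)
  have hPA : ∀ S : Finset (Fin n), S.card = j → P (A S) = p ^ j * q ^ (n - j) := by
    intro S hS
    rw [hA_inter S, hindep.meas_biInter (fun m _ => ⟨sS S m, hsS_meas S m, rfl⟩)]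
    rw [← Fin.prod_univ_eq_prod_range (fun m => P (X m ⁻¹' sS S m)) n]
    have hterm : ∀ i : Fin n, P (X (i : ℕ) ⁻¹' sS S (i : ℕ)) = if i ∈ S then p else q := by
      intro i
      rw [hsS]
      dsimp only
      rw [dif_pos i.isLt]
      simp only [Fin.eta]
      by_cases hmem : i ∈ S
      · rw [if_pos hmem, if_pos hmem]
        exact P_le hmeas hdist hlam ht i
      · rw [if_neg hmem, if_neg hmem]
        have : X (i:ℕ) ⁻¹' Ioi t = {ω | t < X (i:ℕ) ω} := rfl
        rw [this]
        exact P_gt hmeas hdist hlam ht i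
    rw [Finset.prod_congr rfl fun i _ => hterm i, Finset.prod_ite, Finset.prod_const,
      Finset.prod_const, Finset.filter_univ_mem]
    have hcard2 : (Finset.univ.filter (fun i : Fin n => ¬ i ∈ S)).card = n - j := by
      rw [Finset.filter_not, Finset.filter_univ_mem, Finset.card_sdiff_of_subset (Finset.subset_univ S),
        Finset.card_univ, Fintype.card_fin, hS]
    rw [hS, hcard2]
  have hunion : {ω | Ncount n X t ω = j}
      = ⋃ S ∈ Finset.powersetCard j (Finset.univ : Finset (Fin n)), A S := by
    ext ω
    simp only [mem_setOf_eq, mem_iUnion, Finset.mem_powersetCard, exists_prop]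
    constructor
    · intro h
      refine ⟨Finset.univ.filter (fun i : Fin n => X i ω ≤ t),
        ⟨Finset.filter_subset _ _, h⟩, ?_⟩
      intro i
      simp [hA, Finset.mem_filter]
    · rintro ⟨S, ⟨hsub, hcard⟩, hS⟩
      have heq : Finset.univ.filter (fun i : Fin n => X i ω ≤ t) = S := by
        ext i
        simp only [Finset.mem_filter, Finset.mem_univ, true_and]
        exact hS i
      rw [Ncount, heq, hcard]
  have hdisj : Set.Pairwise
      ↑(Finset.powersetCard j (Finset.univ : Finset (Fin n))) (Function.onFun Disjoint A) := by
    intro S _ T _ hST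
    simp only [Function.onFun]
    rw [Set.disjoint_left]
    intro ω hωS hωT
    exact hST (Finset.ext fun i => ((hωS i).symm.trans (hωT i)))
  rw [hunion, measure_biUnion_finset hdisj (fun S _ => hA_meas S),
    Finset.sum_congr rfl (fun S hS => hPA S (Finset.mem_powersetCard.1 hS).2),
    Finset.sum_const, Finset.card_powersetCard, Finset.card_univ, Fintype.card_fin,
    nsmul_eq_mul]
  ring

lemma meas_Ncount_toReal (hmeas : ∀ i, Measurable (X i))
    (hindep : iIndepFun X P)
    (hdist : ∀ i, Measure.map (X i) P = expMeasure lam)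
    (hlam : 0 < lam) {n : ℕ} {t : ℝ} (ht : 0 ≤ t) (j : ℕ) :
    (P {ω | Ncount n X t ω = j}).toReal
      = (n.choose j : ℝ) * (1 - Real.exp (-(lam * t))) ^ j
        * (Real.exp (-(lam * t))) ^ (n - j) := by
  have he1 : Real.exp (-(lam * t)) ≤ 1 := by
    rw [Real.exp_le_one_iff]; nlinarith
  rw [meas_Ncount_eq hmeas hindep hdist hlam ht j]
  rw [ENNReal.toReal_mul, ENNReal.toReal_mul, ENNReal.toReal_pow, ENNReal.toReal_pow,
    ENNReal.toReal_ofReal (by linarith), ENNReal.toReal_ofReal (Real.exp_nonneg _)]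
  simp

end Binomial


section OrderStat

variable {Ω : Type*} [MeasurableSpace Ω] {P : Measure Ω} [IsProbabilityMeasure P]
  {lam : ℝ} {X : ℕ → Ω → ℝ}

lemma integrable_X (hmeas : ∀ i, Measurable (X i))
    (hdist : ∀ i, Measure.map (X i) P = expMeasure lam) (hlam : 0 < lam) (i : ℕ) :
    Integrable (X i) P := by
  have h := integrable_id_expMeasure hlam
  rw [← hdist i] at h
  exact (integrable_map_measure aestronglyMeasurable_id (hmeas i).aemeasurable).1 h

lemma integrable_orderStat (hmeas : ∀ i, Measurable (X i))
    (hdist : ∀ i, Measure.map (X i) P = expMeasure lam) (hlam : 0 < lam)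
    (n : ℕ) (k : ℕ) :
    Integrable (fun ω => orderStat (fun i : Fin n => X i ω) k) P := by
  refine Integrable.mono' (g := fun ω => ∑ i : Fin n, |X i ω|)
    (integrable_finset_sum _ fun i _ => (integrable_X hmeas hdist hlam i).abs)
    ((measurable_orderStat hmeas k).aestronglyMeasurable) ?_
  filter_upwards with ω
  rw [Real.norm_eq_abs]
  exact abs_orderStat_le _ k

lemma phi_integrable (hlam : 0 < lam) {n j : ℕ} (hj : j < n) :
    IntegrableOn
      (fun t : ℝ => (1 - Real.exp (-(lam * t))) ^ j * (Real.exp (-(lam * t))) ^ (n - j))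
      (Ioi (0:ℝ)) volume := by
  have hcont : Continuous fun t : ℝ =>
      (1 - Real.exp (-(lam * t))) ^ j * (Real.exp (-(lam * t))) ^ (n - j) := by fun_prop
  have hexp : IntegrableOn (fun t : ℝ => Real.exp (-(lam * t))) (Ioi (0:ℝ)) volume := by
    have h := exp_neg_integrableOn_Ioi 0 hlam
    exact h.congr_fun (fun t _ => by ring_nf) measurableSet_Ioi
  refine Integrable.mono' hexp (hcont.aestronglyMeasurable.restrict) ?_
  rw [ae_restrict_iff' measurableSet_Ioi]
  filter_upwards with t ht
  have ht' : (0:ℝ) < t := ht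
  have he0 : (0:ℝ) < Real.exp (-(lam * t)) := Real.exp_pos _
  have he1 : Real.exp (-(lam * t)) ≤ 1 := by
    rw [Real.exp_le_one_iff]; nlinarith
  have he2 : (0:ℝ) ≤ 1 - Real.exp (-(lam * t)) := by linarith
  rw [Real.norm_eq_abs, abs_of_nonneg (mul_nonneg (pow_nonneg he2 _) (pow_nonneg he0.le _))]
  calc (1 - Real.exp (-(lam * t))) ^ j * (Real.exp (-(lam * t))) ^ (n - j)
      ≤ 1 * (Real.exp (-(lam * t))) ^ (n - j) := by
        apply mul_le_mul_of_nonneg_right _ (pow_nonneg he0.le _)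
        exact pow_le_one₀ (by linarith) (by linarith)
  _ = (Real.exp (-(lam * t))) ^ (n - j) := one_mul _
  _ ≤ (Real.exp (-(lam * t))) ^ 1 := by
        apply pow_le_pow_of_le_one he0.le he1
        omega
  _ = Real.exp (-(lam * t)) := pow_one _

lemma phi_integral (hlam : 0 < lam) {n j : ℕ} (hj : j < n) :
    (∫ t in Ioi (0:ℝ), (1 - Real.exp (-(lam * t))) ^ j * (Real.exp (-(lam * t))) ^ (n - j))
      = (1/lam) * ((j.factorial : ℝ) * (n - j - 1).factorial / n.factorial) := by
  have key := cv_integral' hlam (fun x => x ^ j * (1 - x) ^ (n - j))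
  have hR : (∫ z in Ioi (0:ℝ),
        (1 - Real.exp (-(lam * z))) ^ j * (1 - (1 - Real.exp (-(lam * z)))) ^ (n - j))
      = ∫ t in Ioi (0:ℝ), (1 - Real.exp (-(lam * t))) ^ j * (Real.exp (-(lam * t))) ^ (n - j) := by
    refine setIntegral_congr_fun measurableSet_Ioi fun z _ => ?_
    rw [sub_sub_cancel]
  rw [hR] at key
  have hL : (∫ x in Ioo (0:ℝ) 1, (x ^ j * (1 - x) ^ (n - j)) / (1 - x))
      = (j.factorial : ℝ) * (n - j - 1).factorial / n.factorial := by
    rw [setIntegral_congr_fun (g := fun x => x ^ j * (1 - x) ^ (n - j - 1))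
      measurableSet_Ioo ?_]
    · rw [beta_Ioo j (n - j - 1)]
      have harg : j + (n - j - 1) + 1 = n := by omega
      rw [harg]
    · intro x hx
      have h1x : (0:ℝ) < 1 - x := by linarith [hx.2]
      show x ^ j * (1 - x) ^ (n - j) / (1 - x) = x ^ j * (1 - x) ^ (n - j - 1)
      have hnj : (1 - x) ^ (n - j) = (1 - x) ^ (n - j - 1) * (1 - x) := by
        rw [← pow_succ]
        congr 1
        omega
      rw [hnj]
      field_simp
  rw [hL] at key
  rw [one_div, inv_mul_eq_div, eq_div_iff hlam.ne']
  linear_combination -key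

lemma choose_identity (hlam : 0 < lam) {n j : ℕ} (hj : j < n) :
    (n.choose j : ℝ) * ((1/lam) * ((j.factorial : ℝ) * (n - j - 1).factorial / n.factorial))
      = 1 / (lam * ((n:ℝ) - j)) := by
  have h2 : (n - j) = (n - j - 1) + 1 := by omega
  have h1 := Nat.choose_mul_factorial_mul_factorial hj.le
  rw [h2, Nat.factorial_succ] at h1
  have hc : ((n - j - 1 : ℕ) : ℝ) + 1 = (n:ℝ) - j := by
    have h3 : (n - j - 1 : ℕ) + 1 = n - j := by omega
    calc ((n - j - 1 : ℕ) : ℝ) + 1 = ((n - j - 1 + 1 : ℕ) : ℝ) := by push_cast; ring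
    _ = ((n - j : ℕ) : ℝ) := by rw [h3]
    _ = (n:ℝ) - j := by rw [Nat.cast_sub hj.le]
  have h1' : (n.choose j : ℝ) * j.factorial * (((n:ℝ) - j) * (n - j - 1).factorial)
      = n.factorial := by
    have := congrArg (Nat.cast : ℕ → ℝ) h1
    push_cast at this
    rw [← this, hc]
  have hnj : (0:ℝ) < (n:ℝ) - j := by
    have : (j:ℝ) < n := by exact_mod_cast hj
    linarith
  have hnf : (n.factorial : ℝ) ≠ 0 := by exact_mod_cast n.factorial_pos.ne'
  field_simp
  nlinarith [h1']

lemma integral_orderStat (hmeas : ∀ i, Measurable (X i))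
    (hindep : iIndepFun X P)
    (hdist : ∀ i, Measure.map (X i) P = expMeasure lam) (hlam : 0 < lam)
    {n k : ℕ} (hk : k ≤ n) :
    (∫ ω, orderStat (fun i : Fin n => X i ω) k ∂P)
      = ∑ j ∈ Finset.range k, 1 / (lam * ((n:ℝ) - j)) := by
  rcases Nat.eq_zero_or_pos k with hk0 | hk1
  · subst hk0
    simp [orderStat]
  · have hae_nonneg : 0 ≤ᵐ[P] fun ω => orderStat (fun i : Fin n => X i ω) k := by
      have hai : ∀ᵐ ω ∂P, ∀ i : Fin n, 0 ≤ X i ω := by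
        rw [ae_all_iff]
        intro i
        rw [ae_iff]
        have hs : {ω | ¬ 0 ≤ X (i:ℕ) ω} = X (i:ℕ) ⁻¹' (Iio 0) := by
          ext ω; simp [not_le]
        rw [hs, ← Measure.map_apply (hmeas i) measurableSet_Iio, hdist,
          expMeasure_Iio_zero]
      filter_upwards [hai] with ω hω
      exact orderStat_nonneg hω k
    have hint := integrable_orderStat hmeas hdist hlam n k
    rw [hint.integral_eq_integral_meas_lt hae_nonneg]
    simp only [measureReal_def]
    have hptwise : EqOn
        (fun t => (P {a | t < orderStat (fun i : Fin n => X i a) k}).toReal)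
        (fun t => ∑ j ∈ Finset.range k, (n.choose j : ℝ) *
            ((1 - Real.exp (-(lam * t))) ^ j * (Real.exp (-(lam * t))) ^ (n - j)))
        (Ioi (0:ℝ)) := by
      intro t ht
      have ht' : (0:ℝ) < t := ht
      simp only
      have hset : {a | t < orderStat (fun i : Fin n => X i a) k}
          = ⋃ j ∈ Finset.range k, {ω | Ncount n X t ω = j} := by
        ext ω
        simp only [mem_setOf_eq, mem_iUnion, Finset.mem_range, exists_prop]
        rw [orderStat_lt_iff X hk1 hk t ω]
        constructor
        · intro h; exact ⟨_, h, rfl⟩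
        · rintro ⟨j, hj, hNj⟩; omega
      have hdisj : Set.Pairwise ↑(Finset.range k)
          (Function.onFun Disjoint fun j => {ω | Ncount n X t ω = j}) := by
        intro a _ b _ hab
        simp only [Function.onFun]
        rw [Set.disjoint_left]
        intro ω h1 h2
        exact hab (h1.symm.trans h2)
      rw [hset, measure_biUnion_finset hdisj
        (fun j _ => (measurable_Ncount hmeas t) (measurableSet_singleton j))]
      rw [ENNReal.toReal_sum (fun j _ => measure_ne_top P _)]
      refine Finset.sum_congr rfl fun j _ => ?_
      rw [meas_Ncount_toReal hmeas hindep hdist hlam ht'.le j, mul_assoc]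
    rw [setIntegral_congr_fun measurableSet_Ioi hptwise]
    rw [integral_finset_sum _ (fun j hj =>
      ((phi_integrable hlam (lt_of_lt_of_le (Finset.mem_range.1 hj) hk)).const_mul _))]
    refine Finset.sum_congr rfl fun j hj => ?_
    have hjn : j < n := lt_of_lt_of_le (Finset.mem_range.1 hj) hk
    rw [integral_const_mul, phi_integral hlam hjn, choose_identity hlam hjn]

end OrderStat

section Final

variable {Ω : Type*} [MeasurableSpace Ω] {P : Measure Ω} [IsProbabilityMeasure P]
  {lam : ℝ} {X : ℕ → Ω → ℝ}

lemma integral_Cw (hmeas : ∀ i, Measurable (X i))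
    (hindep : iIndepFun X P)
    (hdist : ∀ i, Measure.map (X i) P = expMeasure lam) (hlam : 0 < lam)
    (w : ℝ → ℝ) {n : ℕ} (hn : 1 ≤ n) :
    (∫ ω, Cw w X n ω ∂P)
      = (1/lam) * ∑ k ∈ Finset.range n, w ((k:ℝ) / n) / ((n:ℝ) - k) := by
  have hO := integrable_orderStat hmeas hdist hlam n
  have hterm : ∀ k : ℕ, Integrable (fun ω => w ((k:ℝ)/n) *
      (orderStat (fun i : Fin n => X i ω) (k+1) - orderStat (fun i : Fin n => X i ω) k)) P := by
    intro k
    exact ((hO (k+1)).sub (hO k)).const_mul _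
  simp only [Cw]
  rw [integral_finset_sum _ (fun k _ => hterm k)]
  rw [Finset.mul_sum]
  refine Finset.sum_congr rfl fun k hk => ?_
  have hkn : k < n := Finset.mem_range.1 hk
  rw [integral_const_mul, integral_sub (hO (k+1)) (hO k),
    integral_orderStat hmeas hindep hdist hlam (by omega : k+1 ≤ n),
    integral_orderStat hmeas hindep hdist hlam (by omega : k ≤ n),
    Finset.sum_range_succ, add_sub_cancel_left]
  have hnk : (0:ℝ) < (n:ℝ) - k := by
    have h : (k:ℝ) < n := by exact_mod_cast hkn
    linarith
  field_simp

end Final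

end MeanCwAux

/-- Under Condition 1, for i.i.d. exponential random variables with rate `λ > 0`:
`∫_0^∞ w(1 - e^{-λz}) dz = (1/λ) ∫_0^1 w(x)/(1-x) dx =: μ_w`, this quantity is finite
(i.e. the integrands are integrable), and
`E[C_n(w)] = (1/λ) ∑_{k=0}^{n-1} w(k/n)/(n-k) → μ_w` as `n → ∞`. -/
theorem mean_Cw_tendsto_mu
    {Ω : Type*} [MeasurableSpace Ω] (P : Measure Ω) [IsProbabilityMeasure P]
    (lam : ℝ) (hlam : 0 < lam)
    (X : ℕ → Ω → ℝ)
    (hmeas : ∀ i, Measurable (X i))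
    (hindep : iIndepFun X P)
    (hdist : ∀ i, Measure.map (X i) P = expMeasure lam)
    (w : ℝ → ℝ) (β : ℝ) (hw : Condition1 w β) :
    (∫ z in Set.Ioi (0 : ℝ), w (1 - Real.exp (-(lam * z))))
        = (1 / lam) * ∫ x in Set.Ioo (0 : ℝ) 1, w x / (1 - x)
    ∧ IntegrableOn (fun z => w (1 - Real.exp (-(lam * z)))) (Set.Ioi (0 : ℝ)) volume
    ∧ IntegrableOn (fun x => w x / (1 - x)) (Set.Ioo (0 : ℝ) 1) volume
    ∧ (∀ n, 1 ≤ n →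
        (∫ ω, Cw w X n ω ∂P) = (1 / lam) * ∑ k ∈ Finset.range n, w (k / n) / ((n : ℝ) - k))
    ∧ Tendsto (fun n : ℕ => (1 / lam) * ∑ k ∈ Finset.range n, w (k / n) / ((n : ℝ) - k))
        atTop (nhds ((1 / lam) * ∫ x in Set.Ioo (0 : ℝ) 1, w x / (1 - x))) := by
  refine ⟨?_, ?_, MeanCwAux.part3 hw, ?_, ?_⟩
  · have h := MeanCwAux.cv_integral' hlam w
    rw [h]
    field_simp
  · exact (MeanCwAux.cv_integrableOn' hlam w).1 (MeanCwAux.part3 hw)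
  · intro n hn
    exact MeanCwAux.integral_Cw hmeas hindep hdist hlam w hn
  · exact (MeanCwAux.part5 hw).const_mul (1/lam)
end

section
/- Assume Condition 1 holds for w with exponent β > 2/3. Then (1/n) Σ_{k=0}^{n−1} |w(k/n)|³/(1−k/n)³ converges, as n → ∞, to ∫_0^1 |w(x)|³/(1−x)³ dx, which is finite; consequently the Lyapunov ratio [(1/(λn)³) Σ_{k=0}^{n−1} |w(k/n)|³/(1−k/n)³] / [(1/(λn)²) Σ_{k=0}^{n−1} w²(k/n)/(1−k/n)²]^{3/2} tends to 0 as n → ∞, provided (1/λ²)∫_0^1 w²(x)/(1−x)² dx > 0. -/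
open MeasureTheory Real Filter Set Topology

lemma integrableOn_one_sub_rpow {a : ℝ} (ha : -1 < a) :
    IntegrableOn (fun x : ℝ => (1 - x) ^ a) (Set.Ioo (0:ℝ) 1) volume := by
  have h1 : IntervalIntegrable (fun x : ℝ => x ^ a) volume 0 1 :=
    intervalIntegral.intervalIntegrable_rpow' ha
  have h2 := (h1.comp_sub_left 1).symm
  norm_num at h2
  exact (intervalIntegrable_iff_integrableOn_Ioo_of_le (by norm_num)).mp h2

/-- Step approximation of `f` on `[0,1)` with mesh `1/n`. -/
noncomputable def stepApprox (f : ℝ → ℝ) (n : ℕ) (x : ℝ) : ℝ :=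
  ∑ k ∈ Finset.range n,
    Set.indicator (Set.Ico ((k:ℝ)/n) (((k:ℝ)+1)/n)) (fun _ => f ((k:ℝ)/n)) x

lemma stepApprox_eq (f : ℝ → ℝ) {n : ℕ} (hn : 0 < n) {x : ℝ}
    (hx0 : 0 ≤ x) (hx1 : x < 1) :
    stepApprox f n x = f ((⌊(n:ℝ)*x⌋₊ : ℝ)/n) := by
  have hnr : (0:ℝ) < n := Nat.cast_pos.mpr hn
  set k0 := ⌊(n:ℝ)*x⌋₊ with hk0
  have hk0n : k0 < n := by
    rw [hk0, Nat.floor_lt (by positivity)]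
    calc (n:ℝ)*x < n*1 := by nlinarith
    _ = n := by ring
  have hle : (k0:ℝ) ≤ (n:ℝ)*x := Nat.floor_le (by positivity)
  have hlt : (n:ℝ)*x < (k0:ℝ)+1 := Nat.lt_floor_add_one _
  have hmem : x ∈ Set.Ico ((k0:ℝ)/n) (((k0:ℝ)+1)/n) := by
    constructor
    · rw [div_le_iff₀ hnr]; linarith [hle, (mul_comm (n:ℝ) x)]
    · rw [lt_div_iff₀ hnr]; linarith [hlt, (mul_comm (n:ℝ) x)]
  rw [stepApprox, Finset.sum_eq_single_of_mem k0 (Finset.mem_range.mpr hk0n)]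
  · exact Set.indicator_of_mem hmem _
  · intro k hk hne
    apply Set.indicator_of_notMem
    intro hxm
    apply hne
    have h1 : (k:ℝ) ≤ (n:ℝ)*x := by
      have := hxm.1; rw [div_le_iff₀ hnr] at this; linarith [mul_comm x (n:ℝ)]
    have h2 : (n:ℝ)*x < (k:ℝ)+1 := by
      have := hxm.2; rw [lt_div_iff₀ hnr] at this; linarith [mul_comm x (n:ℝ)]
    rw [hk0]
    symm
    rw [Nat.floor_eq_iff (by positivity)]
    exact ⟨h1, by exact_mod_cast h2⟩

lemma stepApprox_measurable (f : ℝ → ℝ) (n : ℕ) : Measurable (stepApprox f n) := by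
  unfold stepApprox
  exact Finset.measurable_sum _ (fun k _ => measurable_const.indicator measurableSet_Ico)

lemma stepApprox_integral (f : ℝ → ℝ) (n : ℕ) :
    ∫ x in Set.Ioo (0:ℝ) 1, stepApprox f n x
      = ((1:ℝ)/n) * ∑ k ∈ Finset.range n, f ((k:ℝ)/n) := by
  rw [setIntegral_congr_set Ioo_ae_eq_Ico]
  unfold stepApprox
  rw [integral_finset_sum]
  · rw [Finset.mul_sum]
    apply Finset.sum_congr rfl
    intro k hk
    have hkn : k < n := Finset.mem_range.mp hk
    have hn : 0 < n := by omega
    have hnr : (0:ℝ) < n := Nat.cast_pos.mpr hn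
    have hsub : Set.Ico ((k:ℝ)/n) (((k:ℝ)+1)/n) ⊆ Set.Ico (0:ℝ) 1 := by
      apply Set.Ico_subset_Ico
      · positivity
      · rw [div_le_one hnr]; exact_mod_cast hkn
    rw [setIntegral_indicator measurableSet_Ico,
      Set.inter_eq_self_of_subset_right hsub, setIntegral_const, smul_eq_mul]
    congr 1
    rw [Real.volume_real_Ico]
    rw [show ((k:ℝ)+1)/n - (k:ℝ)/n = 1/n by field_simp; ring]
    exact max_eq_left (by positivity)
  · intro k hk
    rw [integrable_indicator_iff measurableSet_Ico]
    apply (integrableOn_const_iff (ε' := ℝ) enorm_ne_top).mpr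
    right
    calc (volume.restrict (Set.Ico (0:ℝ) 1)) (Set.Ico ((k:ℝ)/n) (((k:ℝ)+1)/n))
        ≤ volume (Set.Ico ((k:ℝ)/n) (((k:ℝ)+1)/n)) := Measure.restrict_apply_le _ _
      _ < ⊤ := by rw [Real.volume_Ico]; exact ENNReal.ofReal_lt_top

lemma riemann_improper (f : ℝ → ℝ) (hf : ContinuousOn f (Set.Ico 0 1))
    {C a δ : ℝ} (hC : 0 ≤ C) (ha : -1 < a) (ha0 : a ≤ 0) (hδ0 : 0 < δ) (hδ1 : δ < 1)
    (hbound : ∀ x ∈ Set.Ico (1-δ) 1, |f x| ≤ C * (1-x) ^ a) :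
    IntegrableOn f (Set.Ioo (0:ℝ) 1) volume ∧
    Tendsto (fun n : ℕ => ((1:ℝ)/n) * ∑ k ∈ Finset.range n, f ((k:ℝ)/n)) atTop
      (𝓝 (∫ x in Set.Ioo (0:ℝ) 1, f x)) := by
  obtain ⟨M, hM⟩ := (isCompact_Icc : IsCompact (Set.Icc (0:ℝ) (1-δ))).exists_bound_of_continuousOn
    (hf.mono (fun x hx => ⟨hx.1, lt_of_le_of_lt hx.2 (by linarith)⟩))
  have hM0 : 0 ≤ M := le_trans (norm_nonneg (f 0)) (hM 0 ⟨le_refl _, by linarith⟩)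
  set g : ℝ → ℝ := fun x => M + C * (1-x) ^ a with hg
  have key : ∀ t x : ℝ, 0 ≤ t → t ≤ x → x < 1 → |f t| ≤ g x := by
    intro t x ht htx hx1
    have hx0 : 0 < 1 - x := by linarith
    have hCx : 0 ≤ C * (1-x)^a := mul_nonneg hC (Real.rpow_nonneg hx0.le _)
    rcases le_or_gt t (1-δ) with h | h
    · calc |f t| ≤ M := hM t ⟨ht, h⟩
        _ ≤ g x := le_add_of_nonneg_right hCx
    · have hb := hbound t ⟨h.le, lt_of_le_of_lt htx hx1⟩
      have hmono : (1-t)^a ≤ (1-x)^a :=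
        Real.rpow_le_rpow_of_nonpos hx0 (by linarith) ha0
      calc |f t| ≤ C * (1-t)^a := hb
        _ ≤ C * (1-x)^a := mul_le_mul_of_nonneg_left hmono hC
        _ ≤ g x := le_add_of_nonneg_left hM0
  have hgint : IntegrableOn g (Set.Ioo (0:ℝ) 1) volume := by
    apply Integrable.add
    · apply (integrableOn_const_iff (ε' := ℝ) enorm_ne_top).mpr
      right
      rw [Real.volume_Ioo]; exact ENNReal.ofReal_lt_top
    · exact (integrableOn_one_sub_rpow ha).const_mul C
  have hfmeas : AEStronglyMeasurable f (volume.restrict (Set.Ioo (0:ℝ) 1)) :=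
    (hf.mono Set.Ioo_subset_Ico_self).aestronglyMeasurable measurableSet_Ioo
  have hfle : ∀ᵐ x ∂(volume.restrict (Set.Ioo (0:ℝ) 1)), ‖f x‖ ≤ g x := by
    refine (ae_restrict_iff' measurableSet_Ioo).mpr (ae_of_all _ ?_)
    intro x hx
    exact key x x hx.1.le le_rfl hx.2
  have hfint : IntegrableOn f (Set.Ioo (0:ℝ) 1) volume :=
    Integrable.mono' hgint hfmeas hfle
  refine ⟨hfint, ?_⟩
  have hDCT : Tendsto (fun n : ℕ => ∫ x in Set.Ioo (0:ℝ) 1, stepApprox f n x) atTop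
      (𝓝 (∫ x in Set.Ioo (0:ℝ) 1, f x)) := by
    apply tendsto_integral_of_dominated_convergence g
      (fun n => (stepApprox_measurable f n).aestronglyMeasurable) hgint
    · intro n
      refine (ae_restrict_iff' measurableSet_Ioo).mpr (ae_of_all _ ?_)
      intro x hx
      rcases Nat.eq_zero_or_pos n with h0 | hn
      · subst h0
        simp only [stepApprox, Finset.range_zero, Finset.sum_empty, norm_zero]
        have : 0 < 1 - x := by linarith [hx.2]
        have : 0 ≤ C * (1-x)^a := mul_nonneg hC (Real.rpow_nonneg this.le _)
        simp only [hg]; linarith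
      · rw [stepApprox_eq f hn hx.1.le hx.2]
        have hnr : (0:ℝ) < n := Nat.cast_pos.mpr hn
        have ht0 : (0:ℝ) ≤ (⌊(n:ℝ)*x⌋₊ : ℝ)/n := by positivity
        have htx : (⌊(n:ℝ)*x⌋₊ : ℝ)/n ≤ x := by
          rw [div_le_iff₀ hnr]
          calc ((⌊(n:ℝ)*x⌋₊ : ℝ)) ≤ (n:ℝ)*x := Nat.floor_le (mul_nonneg hnr.le hx.1.le)
            _ = x * n := mul_comm _ _
        exact key _ x ht0 htx hx.2
    · refine (ae_restrict_iff' measurableSet_Ioo).mpr (ae_of_all _ ?_)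
      intro x hx
      have hfl : Tendsto (fun n : ℕ => (⌊(n:ℝ)*x⌋₊ : ℝ)/n) atTop (𝓝 x) := by
        have := (tendsto_nat_floor_mul_div_atTop hx.1.le).comp
          (tendsto_natCast_atTop_atTop (R := ℝ))
        simpa [Function.comp_def, mul_comm] using this
      have hcont : ContinuousAt f x :=
        hf.continuousAt (Filter.mem_of_superset (isOpen_Ioo.mem_nhds hx)
          Set.Ioo_subset_Ico_self)
      have := hcont.tendsto.comp hfl
      apply this.congr'
      filter_upwards [eventually_ge_atTop 1] with n hn
      exact (stepApprox_eq f hn hx.1.le hx.2).symm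
  exact hDCT.congr (stepApprox_integral f)

/-- Under Condition 1 with exponent `β > 2/3`,
`(1/n) ∑_{k=0}^{n-1} |w(k/n)|³/(1-k/n)³ → ∫_0^1 |w(x)|³/(1-x)³ dx < ∞`, and consequently
the Lyapunov ratio tends to `0` provided `(1/λ²) ∫_0^1 w²(x)/(1-x)² dx > 0`. -/
theorem lyapunov_ratio_tendsto_zero
    (w : ℝ → ℝ) (β : ℝ) (hw : Condition1 w β) (hβ : 2 / 3 < β) (lam : ℝ) (hlam : 0 < lam) :
    IntegrableOn (fun x => |w x| ^ 3 / (1 - x) ^ 3) (Set.Ioo (0 : ℝ) 1) volume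
    ∧ Tendsto
        (fun n : ℕ => ((1 : ℝ) / n) * ∑ k ∈ Finset.range n, |w (k / n)| ^ 3 / (1 - (k : ℝ) / n) ^ 3)
        atTop (nhds (∫ x in Set.Ioo (0 : ℝ) 1, |w x| ^ 3 / (1 - x) ^ 3))
    ∧ ((1 / lam ^ 2) * ∫ x in Set.Ioo (0 : ℝ) 1, (w x) ^ 2 / (1 - x) ^ 2 > 0 →
        Tendsto
          (fun n : ℕ =>
            ((1 / (lam * n) ^ 3) * ∑ k ∈ Finset.range n, |w (k / n)| ^ 3 / (1 - (k : ℝ) / n) ^ 3)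
            / ((1 / (lam * n) ^ 2)
                * ∑ k ∈ Finset.range n, (w (k / n)) ^ 2 / (1 - (k : ℝ) / n) ^ 2) ^ (3 / 2 : ℝ))
          atTop (nhds 0)) := by
  obtain ⟨hwc, ⟨hβ0, hβ1⟩, x₀, ⟨hx₀0, hx₀1⟩, c, hc, hb⟩ := hw
  -- the two relevant functions
  set f₃ : ℝ → ℝ := fun x => |w x| ^ 3 / (1 - x) ^ 3 with hf₃def
  set f₂ : ℝ → ℝ := fun x => (w x) ^ 2 / (1 - x) ^ 2 with hf₂def
  have hwc' : ContinuousOn w (Set.Ico 0 1) := hwc.mono Set.Ico_subset_Icc_self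
  have hne : ∀ x ∈ Set.Ico (0:ℝ) 1, (1:ℝ) - x ≠ 0 := by
    intro x hx; have := hx.2; intro h; linarith [sub_eq_zero.mp h]
  have hf₃ : ContinuousOn f₃ (Set.Ico 0 1) := by
    apply ContinuousOn.div (hwc'.abs.pow 3) ((continuousOn_const.sub continuousOn_id).pow 3)
    intro x hx
    exact pow_ne_zero 3 (hne x hx)
  have hf₂ : ContinuousOn f₂ (Set.Ico 0 1) := by
    apply ContinuousOn.div (hwc'.pow 2) ((continuousOn_const.sub continuousOn_id).pow 2)
    intro x hx
    exact pow_ne_zero 2 (hne x hx)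
  have hbound3 : ∀ x ∈ Set.Ico (1-x₀) 1, |f₃ x| ≤ c^3 * (1-x) ^ (β*3-3) := by
    intro x hx
    have h1x : 0 < 1 - x := by linarith [hx.2]
    have hwx := hb x ⟨hx.1, hx.2.le⟩
    have h3 : |w x|^3 ≤ c^3 * (1-x)^(β*3) := by
      calc |w x|^3 ≤ (c*(1-x)^β)^3 := pow_le_pow_left₀ (abs_nonneg _) hwx 3
        _ = c^3 * ((1-x)^β)^3 := by ring
        _ = c^3 * (1-x)^(β*3) := by
            rw [← Real.rpow_natCast ((1-x)^β) 3, ← Real.rpow_mul h1x.le]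
            norm_num
    calc |f₃ x| = |w x|^3/(1-x)^3 := by
          simp only [hf₃def]
          exact abs_of_nonneg (by positivity)
      _ ≤ (c^3*(1-x)^(β*3))/(1-x)^3 := by gcongr
      _ = c^3 * (1-x)^(β*3-3) := by
          rw [Real.rpow_sub h1x, show ((3:ℝ)) = ((3:ℕ):ℝ) by norm_num, Real.rpow_natCast]
          ring
  have hbound2 : ∀ x ∈ Set.Ico (1-x₀) 1, |f₂ x| ≤ c^2 * (1-x) ^ (β*2-2) := by
    intro x hx
    have h1x : 0 < 1 - x := by linarith [hx.2]
    have hwx := hb x ⟨hx.1, hx.2.le⟩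
    have h3 : (w x)^2 ≤ c^2 * (1-x)^(β*2) := by
      calc (w x)^2 = |w x|^2 := (sq_abs _).symm
        _ ≤ (c*(1-x)^β)^2 := pow_le_pow_left₀ (abs_nonneg _) hwx 2
        _ = c^2 * ((1-x)^β)^2 := by ring
        _ = c^2 * (1-x)^(β*2) := by
            rw [← Real.rpow_natCast ((1-x)^β) 2, ← Real.rpow_mul h1x.le]
            norm_num
    calc |f₂ x| = (w x)^2/(1-x)^2 := by
          simp only [hf₂def]
          exact abs_of_nonneg (by positivity)
      _ ≤ (c^2*(1-x)^(β*2))/(1-x)^2 := by gcongr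
      _ = c^2 * (1-x)^(β*2-2) := by
          rw [Real.rpow_sub h1x, show ((2:ℝ)) = ((2:ℕ):ℝ) by norm_num, Real.rpow_natCast]
          ring
  obtain ⟨hint3, htend3⟩ := riemann_improper f₃ hf₃ (by positivity)
    (by linarith : (-1:ℝ) < β*3-3) (by linarith) hx₀0 hx₀1 hbound3
  obtain ⟨hint2, htend2⟩ := riemann_improper f₂ hf₂ (by positivity)
    (by linarith : (-1:ℝ) < β*2-2) (by linarith) hx₀0 hx₀1 hbound2
  refine ⟨hint3, htend3, ?_⟩
  intro hpos
  have hB : 0 < ∫ x in Set.Ioo (0:ℝ) 1, f₂ x := by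
    have h2 := mul_pos (pow_pos hlam 2) hpos
    have hl2 : lam^2 ≠ 0 := by positivity
    rw [show lam^2 * (1/lam^2 * ∫ x in Set.Ioo (0:ℝ) 1, f₂ x)
        = ∫ x in Set.Ioo (0:ℝ) 1, f₂ x by field_simp] at h2
    exact h2
  have hnum : Tendsto (fun n : ℕ =>
      (((1:ℝ)/n) * ∑ k ∈ Finset.range n, |w ((k:ℝ)/n)| ^ 3 / (1 - (k:ℝ)/n) ^ 3)
        / (((1:ℝ)/n) * ∑ k ∈ Finset.range n, (w ((k:ℝ)/n)) ^ 2 / (1 - (k:ℝ)/n) ^ 2) ^ (3/2:ℝ))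
      atTop (𝓝 ((∫ x in Set.Ioo (0:ℝ) 1, f₃ x)
        / (∫ x in Set.Ioo (0:ℝ) 1, f₂ x) ^ (3/2:ℝ))) :=
    htend3.div (htend2.rpow_const (Or.inl hB.ne')) (Real.rpow_pos_of_pos hB _).ne'
  have hsq : Tendsto (fun n : ℕ => Real.sqrt n) atTop atTop := by
    have h := (tendsto_rpow_atTop (by norm_num : (0:ℝ) < 1/2)).comp
      (tendsto_natCast_atTop_atTop (R := ℝ))
    apply h.congr
    intro n
    simp [Function.comp, Real.sqrt_eq_rpow]
  have hmain := hnum.div_atTop hsq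
  refine Filter.Tendsto.congr' ?_ hmain
  filter_upwards [htend2.eventually (lt_mem_nhds
      (by linarith : (∫ x in Set.Ioo (0:ℝ) 1, f₂ x)/2 < ∫ x in Set.Ioo (0:ℝ) 1, f₂ x)),
    eventually_ge_atTop 1] with n hbn hn1
  have hnr : (0:ℝ) < n := by exact_mod_cast Nat.lt_of_lt_of_le Nat.zero_lt_one hn1
  set S3 := ∑ k ∈ Finset.range n, |w ((k:ℝ)/n)| ^ 3 / (1 - (k:ℝ)/n) ^ 3 with hS3def
  set S2 := ∑ k ∈ Finset.range n, (w ((k:ℝ)/n)) ^ 2 / (1 - (k:ℝ)/n) ^ 2 with hS2def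
  have hb2 : 0 < 1/(n:ℝ) * S2 := by linarith
  symm
  have e1 : (1/(lam*(n:ℝ))^2) * S2 = ((1/(n:ℝ))*S2) / (lam^2*(n:ℝ)) := by
    have h1 : lam ≠ 0 := hlam.ne'
    have h2 : (n:ℝ) ≠ 0 := hnr.ne'
    field_simp
  have hr0 : 0 < Real.sqrt (n:ℝ) := Real.sqrt_pos.mpr hnr
  have e2 : (((1/(n:ℝ))*S2)/(lam^2*(n:ℝ)))^(3/2:ℝ)
      = ((1/(n:ℝ))*S2)^(3/2:ℝ) / (lam^3 * ((n:ℝ) * Real.sqrt (n:ℝ))) := by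
    rw [Real.div_rpow hb2.le (by positivity)]
    congr 1
    rw [Real.mul_rpow (by positivity) hnr.le]
    congr 1
    · rw [← Real.rpow_natCast lam 2, ← Real.rpow_mul hlam.le,
        show ((2:ℕ):ℝ)*(3/2:ℝ) = ((3:ℕ):ℝ) by norm_num, Real.rpow_natCast]
    · rw [show (3/2:ℝ) = 1 + 1/2 by norm_num, Real.rpow_add hnr, Real.rpow_one,
        ← Real.sqrt_eq_rpow]
  rw [e1, e2]
  set X := ((1/(n:ℝ))*S2)^(3/2:ℝ) with hXdef
  have hX : 0 < X := Real.rpow_pos_of_pos hb2 _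
  set r := Real.sqrt (n:ℝ) with hrdef
  have hrr : r * r = (n:ℝ) := Real.mul_self_sqrt hnr.le
  rw [show ((n:ℝ)) = r*r from hrr.symm]
  field_simp
end

section
/- Assume Condition 2 holds for w and that h_w(x) > 0 for almost every x ∈ [0,1). Then for every y > 0, Λ_w*(y) ≤ M_w(y), where M_w(y) := ∫_0^1 H(Exp(1/y) | Exp(λ h_w(x)^{−1})) dx and H(Exp(λ₁) | Exp(λ₂)) = λ₂/λ₁ − 1 − log(λ₂/λ₁) is the relative entropy of the exponential distribution with rate λ₁ with respect to the exponential distribution with rate λ₂. -/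
open MeasureTheory ProbabilityTheory Real Filter Set
open scoped ENNReal Classical

/-- Condition 1 with `β = 1`. -/
def Condition1betaOne (w : ℝ → ℝ) : Prop :=
  ContinuousOn w (Set.Icc 0 1) ∧
    ∃ x₀ ∈ Set.Ioo (0 : ℝ) 1, ∃ c > (0 : ℝ),
      ∀ x ∈ Set.Icc (1 - x₀) 1, |w x| ≤ c * (1 - x)

/-- `h_w(x) = w(x)/(1-x)`. -/
noncomputable def hw (w : ℝ → ℝ) (x : ℝ) : ℝ := w x / (1 - x)

/-- The extended-real-valued function
`Λ_w(θ) = ∫_0^1 log (λ/(λ - θ h_w(x))) dx` if `sup_{x ∈ [0,1)} θ h_w(x) ≤ λ` (with the integral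
possibly equal to `+∞`, in which case `Λ_w(θ) = ⊤`), and `Λ_w(θ) = ⊤` otherwise. -/
noncomputable def LambdaW (lam : ℝ) (w : ℝ → ℝ) (θ : ℝ) : EReal :=
  if (∀ x ∈ Set.Ico (0 : ℝ) 1, θ * hw w x ≤ lam)
      ∧ (∀ᵐ x ∂(volume.restrict (Set.Ioo (0 : ℝ) 1)), θ * hw w x ≠ lam)
      ∧ IntegrableOn (fun x => Real.log (lam / (lam - θ * hw w x))) (Set.Ioo (0 : ℝ) 1) volume
  then ((∫ x in Set.Ioo (0 : ℝ) 1, Real.log (lam / (lam - θ * hw w x)) : ℝ) : EReal)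
  else ⊤

/-- Condition 2: `w` satisfies Condition 1 with `β = 1` and `Λ_w` is finite in a
neighbourhood of the origin. -/
def Condition2 (lam : ℝ) (w : ℝ → ℝ) : Prop :=
  Condition1betaOne w ∧ ∃ ε > (0 : ℝ), ∀ θ : ℝ, |θ| < ε → LambdaW lam w θ ≠ ⊤

/-- The Legendre transform `Λ_w^*(y) = sup_θ (θ y - Λ_w(θ))`. -/
noncomputable def LambdaStar (lam : ℝ) (w : ℝ → ℝ) (y : ℝ) : EReal :=
  ⨆ θ : ℝ, ((θ * y : ℝ) : EReal) - LambdaW lam w θ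

/-- Pointwise Legendre-duality inequality together with nonnegativity of the entropy term. -/
lemma aux_pointwise_entropy {lam h y θ : ℝ} (hlam : 0 < lam) (hh : 0 < h) (hy : 0 < y)
    (h1 : θ * h < lam) :
    θ * y - Real.log (lam / (lam - θ * h)) ≤ lam * h⁻¹ * y - 1 - Real.log (lam * h⁻¹ * y) ∧
      0 ≤ lam * h⁻¹ * y - 1 - Real.log (lam * h⁻¹ * y) := by
  have ha : 0 < lam * h⁻¹ := by positivity
  have hay : 0 < lam * h⁻¹ * y := by positivity
  have hg0 : Real.log (lam * h⁻¹ * y) ≤ lam * h⁻¹ * y - 1 := Real.log_le_sub_one_of_pos hay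
  refine ⟨?_, by linarith⟩
  have haθ : θ < lam * h⁻¹ := by
    rw [← div_eq_mul_inv]
    exact (lt_div_iff₀ hh).mpr h1
  have hsub : 0 < lam * h⁻¹ - θ := by linarith
  have hlam' : 0 < lam - θ * h := by linarith
  have hrw : lam / (lam - θ * h) = (lam * h⁻¹) / (lam * h⁻¹ - θ) := by
    rw [div_eq_div_iff hlam'.ne' hsub.ne']
    have : lam * h⁻¹ * (θ * h) = lam * θ := by
      rw [mul_comm θ h, ← mul_assoc, mul_assoc lam h⁻¹ h, inv_mul_cancel₀ hh.ne', mul_one]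
    rw [mul_sub, mul_sub, this]
    ring
  rw [hrw, Real.log_div ha.ne' hsub.ne', Real.log_mul ha.ne' hy.ne']
  have hkey : Real.log ((lam * h⁻¹ - θ) * y) ≤ (lam * h⁻¹ - θ) * y - 1 :=
    Real.log_le_sub_one_of_pos (by positivity)
  rw [Real.log_mul hsub.ne' hy.ne'] at hkey
  nlinarith [hkey]

/-- Under Condition 2 for `w` with `h_w > 0` almost everywhere, for every `y > 0` one has
`Λ_w^*(y) ≤ M_w(y) := ∫_0^1 H(Exp(1/y) | Exp(λ h_w(x)⁻¹)) dx`, where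
`H(Exp(λ₁)|Exp(λ₂)) = λ₂/λ₁ - 1 - log (λ₂/λ₁)` is the relative entropy (a nonnegative
quantity, so `M_w(y)` is defined here as a lower Lebesgue integral in `[0,∞]`). -/
theorem LambdaStar_le_Mw
    (lam : ℝ) (hlam : 0 < lam) (w : ℝ → ℝ) (hCond : Condition2 lam w)
    (hpos : ∀ᵐ x ∂(volume.restrict (Set.Ioo (0 : ℝ) 1)), 0 < hw w x) :
    ∀ y : ℝ, 0 < y →
      LambdaStar lam w y ≤
        ((∫⁻ x in Set.Ioo (0 : ℝ) 1,
          ENNReal.ofReal (lam * (hw w x)⁻¹ * y - 1 - Real.log (lam * (hw w x)⁻¹ * y))) : EReal) := by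
  intro y hy
  rw [LambdaStar]
  apply iSup_le
  intro θ
  by_cases hc : (∀ x ∈ Set.Ico (0 : ℝ) 1, θ * hw w x ≤ lam)
      ∧ (∀ᵐ x ∂(volume.restrict (Set.Ioo (0 : ℝ) 1)), θ * hw w x ≠ lam)
      ∧ IntegrableOn (fun x => Real.log (lam / (lam - θ * hw w x))) (Set.Ioo (0 : ℝ) 1) volume
  · obtain ⟨hle, hne, hint⟩ := hc
    rw [LambdaW, if_pos ⟨hle, hne, hint⟩]
    set I : ℝ := ∫ x in Set.Ioo (0 : ℝ) 1, Real.log (lam / (lam - θ * hw w x)) with hI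
    set L : ℝ≥0∞ := ∫⁻ x in Set.Ioo (0 : ℝ) 1,
      ENNReal.ofReal (lam * (hw w x)⁻¹ * y - 1 - Real.log (lam * (hw w x)⁻¹ * y)) with hL
    -- the a.e. pointwise facts
    have hmem : ∀ᵐ x ∂(volume.restrict (Set.Ioo (0 : ℝ) 1)), x ∈ Set.Ioo (0 : ℝ) 1 :=
      ae_restrict_mem measurableSet_Ioo
    have hptwise : ∀ᵐ x ∂(volume.restrict (Set.Ioo (0 : ℝ) 1)),
        θ * y - Real.log (lam / (lam - θ * hw w x))
          ≤ lam * (hw w x)⁻¹ * y - 1 - Real.log (lam * (hw w x)⁻¹ * y) ∧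
        0 ≤ lam * (hw w x)⁻¹ * y - 1 - Real.log (lam * (hw w x)⁻¹ * y) := by
      filter_upwards [hpos, hne, hmem] with x hx1 hx2 hx3
      exact aux_pointwise_entropy hlam hx1 hy
        (lt_of_le_of_ne (hle x ⟨hx3.1.le, hx3.2⟩) hx2)
    -- integrability
    have hfi : Integrable (fun x => θ * y - Real.log (lam / (lam - θ * hw w x)))
        (volume.restrict (Set.Ioo (0 : ℝ) 1)) := (integrable_const _).sub hint
    have hfpi : Integrable (fun x => max (θ * y - Real.log (lam / (lam - θ * hw w x))) 0)
        (volume.restrict (Set.Ioo (0 : ℝ) 1)) := hfi.pos_part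
    have heq : ∫ x in Set.Ioo (0 : ℝ) 1, (θ * y - Real.log (lam / (lam - θ * hw w x)))
        = θ * y - I := by
      rw [integral_sub (integrable_const _) hint]
      simp [hI]
    have key : ENNReal.ofReal (θ * y - I) ≤ L := by
      calc ENNReal.ofReal (θ * y - I)
          = ENNReal.ofReal (∫ x in Set.Ioo (0 : ℝ) 1,
              (θ * y - Real.log (lam / (lam - θ * hw w x)))) := by rw [heq]
        _ ≤ ENNReal.ofReal (∫ x in Set.Ioo (0 : ℝ) 1,
              max (θ * y - Real.log (lam / (lam - θ * hw w x))) 0) :=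
            ENNReal.ofReal_le_ofReal
              (integral_mono hfi hfpi fun x => le_max_left _ _)
        _ = ∫⁻ x in Set.Ioo (0 : ℝ) 1,
              ENNReal.ofReal (max (θ * y - Real.log (lam / (lam - θ * hw w x))) 0) :=
            ofReal_integral_eq_lintegral_ofReal hfpi
              (Eventually.of_forall fun x => le_max_right _ _)
        _ ≤ L := by
            refine lintegral_mono_ae ?_
            filter_upwards [hptwise] with x hx
            exact ENNReal.ofReal_le_ofReal (max_le hx.1 hx.2)
    calc ((θ * y : ℝ) : EReal) - (I : EReal)
        = ((θ * y - I : ℝ) : EReal) := by norm_cast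
      _ ≤ ((ENNReal.ofReal (θ * y - I) : ℝ≥0∞) : EReal) := by
          rw [EReal.coe_ennreal_ofReal]
          exact_mod_cast le_max_left _ _
      _ ≤ (L : EReal) := by exact_mod_cast key
  · rw [LambdaW, if_neg hc, EReal.sub_top]
    exact bot_le
end

section
/- Assume Condition 2 holds for w and that h_w(x) > 0 for almost every x ∈ [0,1). Then Λ_w*(y) = +∞ for every y ≤ 0. -/
open MeasureTheory ProbabilityTheory Real Filter Set
open scoped ENNReal Classical

/-- Under Condition 2 for `w` with `h_w > 0` almost everywhere, `Λ_w^*(y) = +∞` for every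
`y ≤ 0`. -/
theorem LambdaStar_eq_top_of_nonpos
    (lam : ℝ) (hlam : 0 < lam) (w : ℝ → ℝ) (hCond : Condition2 lam w)
    (hpos : ∀ᵐ x ∂(volume.restrict (Set.Ioo (0 : ℝ) 1)), 0 < hw w x) :
    ∀ y : ℝ, y ≤ 0 → LambdaStar lam w y = ⊤ := by
  obtain ⟨⟨hwc, x₀, hx₀, c, hc, hbd⟩, -⟩ := hCond
  -- continuity of `hw` on `[0,1)`
  have hhw_cont : ContinuousOn (hw w) (Set.Ico 0 1) := by
    apply ContinuousOn.div (hwc.mono Set.Ico_subset_Icc_self)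
      (continuousOn_const.sub continuousOn_id)
    intro x hx
    have : x < 1 := hx.2
    intro h0
    simp only [Pi.sub_apply, id_eq] at h0
    have := sub_eq_zero.mp h0
    linarith
  -- `hw` is nonnegative everywhere on `[0,1)`
  have hnn : ∀ x ∈ Set.Ico (0 : ℝ) 1, 0 ≤ hw w x := by
    intro x₁ hx₁
    by_contra hneg
    push_neg at hneg
    have hct := hhw_cont x₁ hx₁
    have hev : hw w ⁻¹' Set.Iio 0 ∈ nhdsWithin x₁ (Set.Ico 0 1) :=
      hct (Iio_mem_nhds hneg)
    obtain ⟨U, hUo, hxU, hU⟩ := mem_nhdsWithin.mp hev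
    obtain ⟨ε, hε, hball⟩ := Metric.isOpen_iff.mp hUo x₁ hxU
    set b := min (x₁ + ε) 1 with hb
    have hx₁b : x₁ < b := lt_min (by linarith) hx₁.2
    have hsub : Set.Ioo x₁ b ⊆ {x | ¬ 0 < hw w x} := by
      intro z hz
      have hzU : z ∈ U := by
        apply hball
        rw [Metric.mem_ball, Real.dist_eq, abs_lt]
        constructor
        · linarith [hz.1]
        · have := hz.2
          have : z < x₁ + ε := lt_of_lt_of_le this (min_le_left _ _)
          linarith
      have hzI : z ∈ Set.Ico (0 : ℝ) 1 :=
        ⟨le_of_lt (lt_of_le_of_lt hx₁.1 hz.1), lt_of_lt_of_le hz.2 (min_le_right _ _)⟩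
      have := hU ⟨hzU, hzI⟩
      simp only [Set.mem_preimage, Set.mem_Iio] at this
      simp only [Set.mem_setOf_eq]
      linarith
    have hsub2 : Set.Ioo x₁ b ⊆ Set.Ioo (0 : ℝ) 1 := by
      intro z hz
      exact ⟨lt_of_le_of_lt hx₁.1 hz.1, lt_of_lt_of_le hz.2 (min_le_right _ _)⟩
    have h0 : volume.restrict (Set.Ioo (0 : ℝ) 1) {x | ¬ 0 < hw w x} = 0 := by
      rw [← MeasureTheory.ae_iff] at *
      exact hpos
    have hle : volume.restrict (Set.Ioo (0 : ℝ) 1) (Set.Ioo x₁ b) = 0 :=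
      measure_mono_null hsub h0
    rw [Measure.restrict_apply measurableSet_Ioo,
      Set.inter_eq_self_of_subset_left hsub2, Real.volume_Ioo] at hle
    have : (0 : ℝ) < b - x₁ := by linarith
    simp [ENNReal.ofReal_eq_zero, not_lt.mpr] at hle
    linarith
  -- a uniform bound on `hw` on `[0,1)`
  obtain ⟨C, hC⟩ := IsCompact.exists_bound_of_continuousOn isCompact_Icc hwc
  obtain ⟨M, hM0, hMb⟩ : ∃ M : ℝ, 0 ≤ M ∧ ∀ x ∈ Set.Ico (0 : ℝ) 1, hw w x ≤ M := by
    refine ⟨max (C / x₀) c, le_trans (le_max_right _ _) le_rfl |>.trans' hc.le, ?_⟩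
    intro x hx
    rcases le_or_gt x (1 - x₀) with hcase | hcase
    · have h1x : x₀ ≤ 1 - x := by linarith
      have h1x' : (0:ℝ) < 1 - x := lt_of_lt_of_le hx₀.1 h1x
      have hwx : |w x| ≤ C := by
        have := hC x ⟨hx.1, hx.2.le⟩
        simpa [Real.norm_eq_abs] using this
      have : hw w x ≤ C / x₀ := by
        rw [hw, div_le_div_iff₀ h1x' hx₀.1]
        calc w x * x₀ ≤ |w x| * x₀ := by
              exact mul_le_mul_of_nonneg_right (le_abs_self _) hx₀.1.le
          _ ≤ C * (1 - x) := by
              apply mul_le_mul hwx h1x (hx₀.1.le) (le_trans (abs_nonneg _) hwx)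
      exact this.trans (le_max_left _ _)
    · have h1x' : (0:ℝ) < 1 - x := by linarith [hx.2]
      have hwx : |w x| ≤ c * (1 - x) := hbd x ⟨hcase.le, hx.2.le⟩
      have : hw w x ≤ c := by
        rw [hw, div_le_iff₀ h1x']
        exact le_trans (le_abs_self _) hwx
      exact this.trans (le_max_right _ _)
  -- for `t ≥ 0`, `LambdaW lam w (-t)` is given by the integral
  have key : ∀ t : ℝ, 0 ≤ t →
      (∀ x ∈ Set.Ico (0 : ℝ) 1, (-t) * hw w x ≤ lam)
      ∧ (∀ᵐ x ∂(volume.restrict (Set.Ioo (0 : ℝ) 1)), (-t) * hw w x ≠ lam)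
      ∧ IntegrableOn (fun x => Real.log (lam / (lam - (-t) * hw w x)))
          (Set.Ioo (0 : ℝ) 1) volume := by
    intro t ht
    have hpt : ∀ x ∈ Set.Ico (0 : ℝ) 1, (-t) * hw w x ≤ 0 := by
      intro x hx
      have := hnn x hx
      nlinarith
    refine ⟨fun x hx => (hpt x hx).trans hlam.le, ?_, ?_⟩
    · apply ae_restrict_of_forall_mem measurableSet_Ioo
      intro x hx
      have := hpt x ⟨hx.1.le, hx.2⟩
      intro h; rw [h] at this; linarith
    · have hden : ∀ x ∈ Set.Ioo (0 : ℝ) 1, lam ≤ lam - (-t) * hw w x := by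
        intro x hx
        have := hpt x ⟨hx.1.le, hx.2⟩
        linarith
      have hdenM : ∀ x ∈ Set.Ioo (0 : ℝ) 1, lam - (-t) * hw w x ≤ lam + t * M := by
        intro x hx
        have h1 := hMb x ⟨hx.1.le, hx.2⟩
        nlinarith
      constructor
      · apply ContinuousOn.aestronglyMeasurable _ measurableSet_Ioo
        apply ContinuousOn.log
        · apply ContinuousOn.div continuousOn_const
          · exact continuousOn_const.sub (continuousOn_const.mul
              (hhw_cont.mono (fun z hz => ⟨hz.1.le, hz.2⟩)))
          · intro x hx
            exact ne_of_gt (lt_of_lt_of_le hlam (hden x hx))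
        · intro x hx
          exact ne_of_gt (div_pos hlam (lt_of_lt_of_le hlam (hden x hx)))
      · apply MeasureTheory.HasFiniteIntegral.of_bounded
          (C := Real.log ((lam + t * M) / lam))
        apply ae_restrict_of_forall_mem measurableSet_Ioo
        intro x hx
        have h1 := hden x hx
        have h2 := hdenM x hx
        have hd0 : (0:ℝ) < lam - (-t) * hw w x := lt_of_lt_of_le hlam h1
        have hr1 : lam / (lam - (-t) * hw w x) ≤ 1 := by
          rw [div_le_one hd0]; linarith
        have hr0 : (0:ℝ) < lam / (lam - (-t) * hw w x) := by positivity
        rw [Real.norm_eq_abs, abs_le]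
        constructor
        · rw [Real.log_div hlam.ne' hd0.ne', neg_le, neg_sub]
          have : Real.log (lam - (-t) * hw w x) ≤ Real.log (lam + t * M) :=
            Real.log_le_log hd0 h2
          have h3 : Real.log ((lam + t * M) / lam)
              = Real.log (lam + t * M) - Real.log lam :=
            Real.log_div (by nlinarith) hlam.ne'
          linarith
        · calc Real.log (lam / (lam - (-t) * hw w x)) ≤ 0 := Real.log_nonpos hr0.le hr1
            _ ≤ Real.log ((lam + t * M) / lam) := by
                apply Real.log_nonneg
                rw [le_div_iff₀ hlam]
                nlinarith
  -- the function `g = min (hw/lam) 1` and its positive integral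
  set g : ℝ → ℝ := fun x => min (hw w x / lam) 1 with hg
  have hg_cont : ContinuousOn g (Set.Ico 0 1) :=
    ContinuousOn.inf (hhw_cont.div_const lam) continuousOn_const
  have hg_int : IntegrableOn g (Set.Ioo (0 : ℝ) 1) volume := by
    constructor
    · exact (ContinuousOn.mono hg_cont Set.Ioo_subset_Ico_self).aestronglyMeasurable
        measurableSet_Ioo
    · apply MeasureTheory.HasFiniteIntegral.of_bounded (C := 1)
      apply ae_restrict_of_forall_mem measurableSet_Ioo
      intro x hx
      have h0 : 0 ≤ g x := by
        apply le_min _ zero_le_one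
        have := hnn x ⟨hx.1.le, hx.2⟩
        positivity
      have h1 : g x ≤ 1 := min_le_right _ _
      rw [Real.norm_eq_abs, abs_le]
      exact ⟨by linarith, h1⟩
  have hc₀ : 0 < ∫ x in Set.Ioo (0 : ℝ) 1, g x := by
    rw [MeasureTheory.setIntegral_pos_iff_support_of_nonneg_ae _ hg_int]
    · by_contra hnp
      push_neg at hnp
      have hz : volume (Function.support g ∩ Set.Ioo (0:ℝ) 1) = 0 := le_antisymm hnp zero_le
      have hae : ∀ᵐ x ∂(volume.restrict (Set.Ioo (0 : ℝ) 1)),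
          x ∉ Function.support g ∩ Set.Ioo (0:ℝ) 1 := by
        rw [MeasureTheory.ae_iff]
        simp only [not_not]
        apply le_antisymm _ zero_le
        calc volume.restrict (Set.Ioo (0:ℝ) 1) {x | x ∈ Function.support g ∩ Set.Ioo (0:ℝ) 1}
            ≤ volume (Function.support g ∩ Set.Ioo (0:ℝ) 1) :=
              Measure.restrict_le_self _
          _ = 0 := hz
        
      have hmem : ∀ᵐ x ∂(volume.restrict (Set.Ioo (0 : ℝ) 1)), x ∈ Set.Ioo (0:ℝ) 1 :=
        ae_restrict_mem measurableSet_Ioo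
      have hNB : (ae (volume.restrict (Set.Ioo (0 : ℝ) 1))).NeBot := by
        apply MeasureTheory.ae_neBot.mpr
        intro h
        have := congrArg (fun m : Measure ℝ => m (Set.Ioo (0:ℝ) 1)) h
        simp [Real.volume_Ioo] at this
      haveI := hNB
      obtain ⟨x, ⟨hx1, hx2⟩, hx3⟩ := ((hpos.and hae).and hmem).exists
      apply hx2
      refine ⟨?_, hx3⟩
      have hgx : 0 < g x := lt_min (by positivity) one_pos
      exact Function.mem_support.mpr (ne_of_gt hgx)
    · apply ae_restrict_of_forall_mem measurableSet_Ioo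
      intro x hx
      apply le_min _ zero_le_one
      have := hnn x ⟨hx.1.le, hx.2⟩
      positivity
  set c₀ := ∫ x in Set.Ioo (0 : ℝ) 1, g x with hc₀def
  -- main integral lower bound
  have main : ∀ t : ℝ, 0 ≤ t →
      Real.log (1 + t) * c₀
        ≤ - ∫ x in Set.Ioo (0:ℝ) 1, Real.log (lam / (lam - (-t) * hw w x)) := by
    intro t ht
    obtain ⟨h1, h2, h3⟩ := key t ht
    have hden : ∀ x ∈ Set.Ioo (0:ℝ) 1, (0:ℝ) < lam - (-t) * hw w x := by
      intro x hx
      have := hnn x ⟨hx.1.le, hx.2⟩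
      nlinarith
    have heq : Set.EqOn (fun x => Real.log (lam / (lam - (-t) * hw w x)))
        (fun x => - Real.log ((lam - (-t) * hw w x) / lam)) (Set.Ioo (0:ℝ) 1) := by
      intro x hx
      have hd0 := hden x hx
      simp only
      rw [Real.log_div hlam.ne' hd0.ne', Real.log_div hd0.ne' hlam.ne']
      ring
    have hI : ∫ x in Set.Ioo (0:ℝ) 1, Real.log (lam / (lam - (-t) * hw w x))
        = - ∫ x in Set.Ioo (0:ℝ) 1, Real.log ((lam - (-t) * hw w x) / lam) := by
      rw [← MeasureTheory.integral_neg]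
      exact MeasureTheory.setIntegral_congr_fun measurableSet_Ioo heq
    rw [hI, neg_neg]
    have hJint : IntegrableOn (fun x => Real.log ((lam - (-t) * hw w x) / lam))
        (Set.Ioo (0:ℝ) 1) volume := by
      have hneg : IntegrableOn (fun x => - Real.log (lam / (lam - (-t) * hw w x)))
          (Set.Ioo (0:ℝ) 1) volume := h3.neg
      refine hneg.congr_fun (fun x hx => ?_) measurableSet_Ioo
      have := heq hx
      simp only at this ⊢
      linarith
    have hpw : ∀ x ∈ Set.Ioo (0:ℝ) 1,
        Real.log (1 + t) * g x ≤ Real.log ((lam - (-t) * hw w x) / lam) := by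
      intro x hx
      have hhx := hnn x ⟨hx.1.le, hx.2⟩
      have hd0 := hden x hx
      have hg0 : 0 ≤ g x := le_min (by positivity) zero_le_one
      have hg1 : g x ≤ 1 := min_le_right _ _
      have h1t : (0:ℝ) < 1 + t := by linarith
      have hbern : (1 + t) ^ (g x) ≤ 1 + g x * t :=
        rpow_one_add_le_one_add_mul_self (by linarith) hg0 hg1
      have hA : g x * Real.log (1 + t) ≤ Real.log (1 + g x * t) := by
        have := Real.log_le_log (Real.rpow_pos_of_pos h1t _) hbern
        rwa [Real.log_rpow h1t] at this
      have hB : 1 + g x * t ≤ (lam - (-t) * hw w x) / lam := by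
        have hgle : g x ≤ hw w x / lam := min_le_left _ _
        rw [le_div_iff₀ hlam]
        have : g x * t * lam ≤ t * hw w x := by
          have := mul_le_mul_of_nonneg_right hgle (mul_nonneg ht hlam.le)
          calc g x * t * lam = g x * (t * lam) := by ring
            _ ≤ hw w x / lam * (t * lam) := this
            _ = t * hw w x := by field_simp
        nlinarith
      calc Real.log (1 + t) * g x = g x * Real.log (1 + t) := by ring
        _ ≤ Real.log (1 + g x * t) := hA
        _ ≤ Real.log ((lam - (-t) * hw w x) / lam) := by
            apply Real.log_le_log (by positivity) hB
    calc Real.log (1 + t) * c₀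
        = ∫ x in Set.Ioo (0:ℝ) 1, Real.log (1 + t) * g x := by
          rw [MeasureTheory.integral_const_mul]
      _ ≤ ∫ x in Set.Ioo (0:ℝ) 1, Real.log ((lam - (-t) * hw w x) / lam) :=
          MeasureTheory.setIntegral_mono_on (hg_int.const_mul _) hJint
            measurableSet_Ioo hpw
  -- conclusion
  intro y hy
  rw [LambdaStar, iSup_eq_top]
  intro b hb
  induction b using EReal.rec with
  | top => exact absurd hb (lt_irrefl ⊤)
  | bot =>
      refine ⟨0, ?_⟩
      have hcond0 := key 0 le_rfl
      simp only [neg_zero] at hcond0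
      rw [LambdaW, if_pos hcond0]
      rw [← EReal.coe_sub]
      exact EReal.bot_lt_coe _
  | coe r =>
      set t : ℝ := Real.exp ((|r| + 1) / c₀) with htdef
      have ht0 : 0 < t := Real.exp_pos _
      refine ⟨-t, ?_⟩
      rw [LambdaW, if_pos (key t ht0.le)]
      rw [← EReal.coe_sub, EReal.coe_lt_coe_iff]
      have hmain := main t ht0.le
      have hlogt : Real.log t = (|r| + 1) / c₀ := Real.log_exp _
      have hlt : (|r| + 1) / c₀ < Real.log (1 + t) := by
        rw [← hlogt]
        exact Real.log_lt_log ht0 (by linarith)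
      have hgt : |r| + 1 < Real.log (1 + t) * c₀ := by
        rw [div_lt_iff₀ hc₀] at hlt
        linarith
      have hty : 0 ≤ -t * y := by nlinarith
      have := hmain
      calc (r : ℝ) ≤ |r| := le_abs_self r
        _ < Real.log (1 + t) * c₀ := by linarith
        _ ≤ - ∫ x in Set.Ioo (0:ℝ) 1, Real.log (lam / (lam - (-t) * hw w x)) := hmain
        _ ≤ -t * y - ∫ x in Set.Ioo (0:ℝ) 1, Real.log (lam / (lam - (-t) * hw w x)) := by
            linarith
end
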